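/- arXiv:2111.01966 — 9 statements merged into one kernel-verified Lean document; each statement's English description precedes it below -/
import Mathlib

section
/- Let V be a finite-dimensional real vector space, n ≥ 2 an integer, H ∈ ℝ, a ∈ {−1,0,1}, b, d ∈ {−1,1}. Let g : ℝ → ℝ be positive and twice differentiable with g″(t) = −d·g(t)·(a + b·κ₁(t)·κ₂(t)) for all t, where κ₁ = H + g^(−n) and κ₂ = H − (n−1)·g^(−n). Let α : ℝ → V be twice differentiable and β : ℝ → V differentiable with α″(t) = b·d·κ₂(t)·β(t) − a·d·α(t) and β′(t) = −κ₂(t)·α′(t) for all t. Then the map ρ(t) := −g′(t)·α′(t) + b·d·g(t)·κ₁(t)·β(t) − d·a·g(t)·α(t) is constant on ℝ. -/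
/-- The map `ρ(t) = −g′(t)·α′(t) + b·d·g(t)·κ₁(t)·β(t) − d·a·g(t)·α(t)` is constant,
where `(α, β)` solves `α″ = b·d·κ₂·β − a·d·α`, `β′ = −κ₂·α′` and
`g″ = −d·g·(a + b·κ₁·κ₂)` (claim `ρ′ = 0` in Theorems 7.2–7.5). -/
theorem stmt_2 (V : Type*) [NormedAddCommGroup V] [NormedSpace ℝ V]
    [FiniteDimensional ℝ V]
    (n : ℕ) (hn : 2 ≤ n) (H a b d : ℝ)
    (ha : a = -1 ∨ a = 0 ∨ a = 1) (hb : b = -1 ∨ b = 1) (hd : d = -1 ∨ d = 1)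
    (g : ℝ → ℝ) (hgpos : ∀ t, 0 < g t)
    (hg : Differentiable ℝ g) (hg' : Differentiable ℝ (deriv g))
    (κ₁ κ₂ : ℝ → ℝ)
    (hκ₁ : ∀ t, κ₁ t = H + g t ^ (-(n : ℤ)))
    (hκ₂ : ∀ t, κ₂ t = H - ((n : ℝ) - 1) * g t ^ (-(n : ℤ)))
    (hg'' : ∀ t : ℝ, deriv (deriv g) t = -d * g t * (a + b * κ₁ t * κ₂ t))
    (α β : ℝ → V)
    (hα : Differentiable ℝ α) (hα' : Differentiable ℝ (deriv α))
    (hβ : Differentiable ℝ β)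
    (hαeq : ∀ t : ℝ, deriv (deriv α) t = (b * d * κ₂ t) • β t - (a * d) • α t)
    (hβeq : ∀ t : ℝ, deriv β t = (-(κ₂ t)) • deriv α t)
    (ρ : ℝ → V)
    (hρ : ∀ t : ℝ, ρ t = (-(deriv g t)) • deriv α t
      + (b * d * g t * κ₁ t) • β t - (d * a * g t) • α t) :
    ∀ s t : ℝ, ρ s = ρ t := by
  have hρfun : ρ = fun t => (-(deriv g t)) • deriv α t
      + (b * d * g t * κ₁ t) • β t - (d * a * g t) • α t := funext hρ
  have hκ₁fun : κ₁ = fun t => H + g t ^ (-(n : ℤ)) := funext hκ₁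
  -- derivative of the zpow part
  have hzpow : ∀ t, HasDerivAt (fun t => g t ^ (-(n : ℤ)))
      (((-(n : ℤ)) : ℝ) * g t ^ ((-(n : ℤ)) - 1) * deriv g t) t := by
    intro t
    exact HasDerivAt.congr_deriv ((hasDerivAt_zpow (-(n : ℤ)) (g t) (Or.inl (hgpos t).ne')).comp t
      (hg t).hasDerivAt) (by push_cast; ring)
  have hκ₁deriv : ∀ t, HasDerivAt κ₁
      (((-(n : ℤ)) : ℝ) * g t ^ ((-(n : ℤ)) - 1) * deriv g t) t := by
    intro t
    rw [hκ₁fun]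
    simpa using (hzpow t).const_add H
  have key : ∀ t, HasDerivAt ρ 0 t := by
    intro t
    have hgt := (hg t).hasDerivAt
    have hg't := (hg' t).hasDerivAt
    have hαt := (hα t).hasDerivAt
    have hα't := (hα' t).hasDerivAt
    have hβt := (hβ t).hasDerivAt
    rw [hβeq t] at hβt
    rw [hαeq t] at hα't
    have h1 : HasDerivAt (fun t => (-(deriv g t)) • deriv α t)
        ((-(deriv g t)) • ((b * d * κ₂ t) • β t - (a * d) • α t)
          + (-(deriv (deriv g) t)) • deriv α t) t :=
      hg't.neg.smul hα't
    have h2 : HasDerivAt (fun t => (b * d * g t * κ₁ t) • β t)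
        ((b * d * g t * κ₁ t) • ((-(κ₂ t)) • deriv α t)
          + (b * d * deriv g t * κ₁ t
            + b * d * g t * (((-(n : ℤ)) : ℝ) * g t ^ ((-(n : ℤ)) - 1) * deriv g t)) • β t) t := by
      have hc : HasDerivAt (fun t => b * d * g t * κ₁ t)
          (b * d * deriv g t * κ₁ t
            + b * d * g t * (((-(n : ℤ)) : ℝ) * g t ^ ((-(n : ℤ)) - 1) * deriv g t)) t := by
        have := ((hgt.const_mul (b * d)).mul (hκ₁deriv t))
        exact this.congr_deriv (by ring)
      exact hc.smul hβt
    have h3 : HasDerivAt (fun t => (d * a * g t) • α t)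
        ((d * a * g t) • deriv α t + (d * a * deriv g t) • α t) t :=
      (hgt.const_mul (d * a)).smul hαt
    have := (h1.add h2).sub h3
    rw [hρfun]
    refine this.congr_deriv (Eq.symm ?_)
    have hgne : g t ≠ 0 := (hgpos t).ne'
    have hκ := hκ₁ t
    have hκ' := hκ₂ t
    have hgg := hg'' t
    have hpow : g t ^ ((-(n : ℤ)) - 1) * g t = g t ^ (-(n : ℤ)) := by
      rw [← zpow_add_one₀ hgne, sub_add_cancel]
    match_scalars
    all_goals try simp only [hκ, hκ', hgg]
    all_goals push_cast
    · linear_combination (b * d * (n : ℝ) * deriv g t) * hpow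
    · ring
    · ring
  intro s t
  exact is_const_of_deriv_eq_zero (fun x => (key x).differentiableAt)
    (fun x => (key x).deriv) s t
end

section
/- Let V be a finite-dimensional real vector space endowed with a symmetric bilinear form ⟨·,·⟩, let a, b, d ∈ {−1,1}, n ≥ 2 an integer, H ∈ ℝ, and let g : ℝ → ℝ be positive and differentiable with κ₂ = H − (n−1)·g^(−n). Let α : ℝ → V be twice differentiable and β : ℝ → V differentiable with α″(t) = b·d·κ₂(t)·β(t) − a·d·α(t) and β′(t) = −κ₂(t)·α′(t) for all t. If ⟨α(0),α(0)⟩ = a, ⟨β(0),β(0)⟩ = b, ⟨α′(0),α′(0)⟩ = d and ⟨α(0),β(0)⟩ = ⟨α(0),α′(0)⟩ = ⟨β(0),α′(0)⟩ = 0, then for every t ∈ ℝ one has ⟨α(t),α(t)⟩ = a, ⟨β(t),β(t)⟩ = b, ⟨α′(t),α′(t)⟩ = d and ⟨α(t),β(t)⟩ = ⟨α(t),α′(t)⟩ = ⟨β(t),α′(t)⟩ = 0. -/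
set_option maxHeartbeats 1000000

open Set Real

/-- Gronwall-type vanishing lemma: a function with `‖x'‖ ≤ c·‖x‖` and `x 0 = 0`
vanishes for nonnegative times. -/
lemma gron_zero_nonneg {E : Type*} [NormedAddCommGroup E] [NormedSpace ℝ E]
    (x x' : ℝ → E) (c : ℝ → ℝ) (hc : Continuous c)
    (hx : ∀ t, HasDerivAt x (x' t) t)
    (hb : ∀ t, ‖x' t‖ ≤ c t * ‖x t‖) (h0 : x 0 = 0) :
    ∀ t, 0 ≤ t → x t = 0 := by
  intro T hT
  obtain ⟨C, hC⟩ := (isCompact_Icc (a := (0:ℝ)) (b := T)).exists_bound_of_continuousOn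
    hc.continuousOn
  have key := norm_le_gronwallBound_of_norm_deriv_right_le
    (f := x) (f' := x') (δ := 0) (K := C) (ε := 0) (a := 0) (b := T)
    (fun s _ => (hx s).continuousAt.continuousWithinAt)
    (fun s _ => (hx s).hasDerivWithinAt)
    (by simp [h0])
    (fun s hs => by
      have h1 : c s ≤ C := le_trans (le_abs_self _)
        (by simpa [Real.norm_eq_abs] using hC s ⟨hs.1, hs.2.le⟩)
      have := hb s
      have h2 : c s * ‖x s‖ ≤ C * ‖x s‖ :=
        mul_le_mul_of_nonneg_right h1 (norm_nonneg _)
      linarith)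
  have := key T ⟨hT, le_rfl⟩
  rw [gronwallBound_ε0_δ0] at this
  exact norm_le_zero_iff.mp this

lemma gron_zero {E : Type*} [NormedAddCommGroup E] [NormedSpace ℝ E]
    (x x' : ℝ → E) (c : ℝ → ℝ) (hc : Continuous c)
    (hx : ∀ t, HasDerivAt x (x' t) t)
    (hb : ∀ t, ‖x' t‖ ≤ c t * ‖x t‖) (h0 : x 0 = 0) :
    ∀ t, x t = 0 := by
  intro t
  rcases le_total 0 t with h | h
  · exact gron_zero_nonneg x x' c hc hx hb h0 t h
  · have hy : ∀ s, HasDerivAt (fun u => x (-u)) ((-1 : ℝ) • x' (-s)) s := fun s =>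
      (hx (-s)).scomp s (hasDerivAt_neg s)
    have := gron_zero_nonneg (fun u => x (-u)) (fun s => (-1 : ℝ) • x' (-s))
      (fun s => c (-s)) (hc.comp continuous_neg) hy
      (fun s => by simpa using hb (-s)) (by simpa using h0) (-t) (by linarith)
    simpa using this

/-- Gram-matrix preservation for the profile ODE system: if `(α, β)` solves
`α″ = b·d·κ₂·β − a·d·α`, `β′ = −κ₂·α′` with orthonormal-type initial conditions
`⟨α(0),α(0)⟩ = a`, `⟨β(0),β(0)⟩ = b`, `⟨α′(0),α′(0)⟩ = d` (off-diagonal zero),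
then the same relations hold for all `t` (proofs of Theorems 7.2–7.5). -/
theorem stmt_3 (V : Type*) [NormedAddCommGroup V] [NormedSpace ℝ V]
    [FiniteDimensional ℝ V]
    (B : V →ₗ[ℝ] V →ₗ[ℝ] ℝ) (hBsymm : ∀ x y : V, B x y = B y x)
    (n : ℕ) (hn : 2 ≤ n) (H a b d : ℝ)
    (ha : a = -1 ∨ a = 1) (hb : b = -1 ∨ b = 1) (hd : d = -1 ∨ d = 1)
    (g : ℝ → ℝ) (hgpos : ∀ t, 0 < g t) (hg : Differentiable ℝ g)
    (κ₂ : ℝ → ℝ)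
    (hκ₂ : ∀ t, κ₂ t = H - ((n : ℝ) - 1) * g t ^ (-(n : ℤ)))
    (α β : ℝ → V)
    (hα : Differentiable ℝ α) (hα' : Differentiable ℝ (deriv α))
    (hβ : Differentiable ℝ β)
    (hαeq : ∀ t : ℝ, deriv (deriv α) t = (b * d * κ₂ t) • β t - (a * d) • α t)
    (hβeq : ∀ t : ℝ, deriv β t = (-(κ₂ t)) • deriv α t)
    (hαα : B (α 0) (α 0) = a) (hββ : B (β 0) (β 0) = b)
    (hα'α' : B (deriv α 0) (deriv α 0) = d)
    (hαβ : B (α 0) (β 0) = 0) (hαα' : B (α 0) (deriv α 0) = 0)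
    (hβα' : B (β 0) (deriv α 0) = 0) :
    ∀ t : ℝ, B (α t) (α t) = a ∧ B (β t) (β t) = b ∧
      B (deriv α t) (deriv α t) = d ∧ B (α t) (β t) = 0 ∧
      B (α t) (deriv α t) = 0 ∧ B (β t) (deriv α t) = 0 := by
  have ha2 : a * a = 1 := by rcases ha with rfl | rfl <;> norm_num
  have hb2 : b * b = 1 := by rcases hb with rfl | rfl <;> norm_num
  have habs_a : |a| = 1 := by rcases ha with rfl | rfl <;> norm_num
  have habs_b : |b| = 1 := by rcases hb with rfl | rfl <;> norm_num
  have habs_d : |d| = 1 := by rcases hd with rfl | rfl <;> norm_num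
  have hκc : Continuous κ₂ := by
    rw [show κ₂ = fun t => H - ((n : ℝ) - 1) * g t ^ (-(n : ℤ)) from funext hκ₂]
    exact continuous_const.sub (continuous_const.mul
      (hg.continuous.zpow₀ _ fun t => Or.inl (hgpos t).ne'))
  have hkey : ∀ (u w : ℝ → V), Differentiable ℝ u → Differentiable ℝ w → ∀ t : ℝ,
      HasDerivAt (fun s => B (u s) (w s)) (B (deriv u t) (w t) + B (u t) (deriv w t)) t := by
    intro u w hu hw t
    let B₁ : V →ₗ[ℝ] (V →L[ℝ] ℝ) :=
      { toFun := fun x => LinearMap.toContinuousLinearMap (B x)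
        map_add' := by intro x y; ext z; simp
        map_smul' := by intro c x; ext z; simp }
    let Bc : V →L[ℝ] V →L[ℝ] ℝ := LinearMap.toContinuousLinearMap B₁
    have h1 : HasDerivAt (fun s => Bc (u s)) (Bc (deriv u t)) t :=
      Bc.hasFDerivAt.comp_hasDerivAt t (hu t).hasDerivAt
    exact h1.clm_apply (hw t).hasDerivAt
  set x : ℝ → (Fin 6 → ℝ) := fun s =>
    ![B (α s) (α s) - a, B (β s) (β s) - b, B (deriv α s) (deriv α s) - d,
      B (α s) (β s), B (α s) (deriv α s), B (β s) (deriv α s)] with hxdef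
  set x' : ℝ → (Fin 6 → ℝ) := fun s =>
    ![2 * B (α s) (deriv α s),
      -2 * κ₂ s * B (β s) (deriv α s),
      2 * (b * d * κ₂ s) * B (β s) (deriv α s) - 2 * (a * d) * B (α s) (deriv α s),
      B (β s) (deriv α s) - κ₂ s * B (α s) (deriv α s),
      (B (deriv α s) (deriv α s) - d) + (b * d * κ₂ s) * B (α s) (β s)
        - (a * d) * (B (α s) (α s) - a),
      -(κ₂ s) * (B (deriv α s) (deriv α s) - d) + (b * d * κ₂ s) * (B (β s) (β s) - b)
        - (a * d) * B (α s) (β s)] with hx'def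
  have hx : ∀ s, HasDerivAt x (x' s) s := by
    intro s
    rw [hasDerivAt_pi]
    intro i
    fin_cases i
    · show HasDerivAt (fun u => B (α u) (α u) - a) (2 * B (α s) (deriv α s)) s
      have h := (hkey α α hα hα s).sub_const a
      refine h.congr_deriv ?_
      rw [hBsymm (deriv α s) (α s)]; ring
    · show HasDerivAt (fun u => B (β u) (β u) - b) (-2 * κ₂ s * B (β s) (deriv α s)) s
      have h := (hkey β β hβ hβ s).sub_const b
      refine h.congr_deriv ?_
      rw [hβeq]
      simp only [map_smul, LinearMap.map_smul₂, LinearMap.smul_apply, smul_eq_mul,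
        hBsymm (deriv α s) (β s)]
      ring
    · show HasDerivAt (fun u => B (deriv α u) (deriv α u) - d)
        (2 * (b * d * κ₂ s) * B (β s) (deriv α s) - 2 * (a * d) * B (α s) (deriv α s)) s
      have h := (hkey (deriv α) (deriv α) hα' hα' s).sub_const d
      refine h.congr_deriv ?_
      rw [hαeq]
      simp only [map_sub, map_smul, LinearMap.map_smul₂, LinearMap.sub_apply,
        LinearMap.smul_apply, smul_eq_mul, hBsymm (deriv α s) (β s), hBsymm (deriv α s) (α s)]
      ring
    · show HasDerivAt (fun u => B (α u) (β u))
        (B (β s) (deriv α s) - κ₂ s * B (α s) (deriv α s)) s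
      have h := hkey α β hα hβ s
      convert h using 1
      rw [hβeq]
      simp only [map_smul, smul_eq_mul, hBsymm (deriv α s) (β s)]
      ring
    · show HasDerivAt (fun u => B (α u) (deriv α u))
        ((B (deriv α s) (deriv α s) - d) + (b * d * κ₂ s) * B (α s) (β s)
          - (a * d) * (B (α s) (α s) - a)) s
      have h := hkey α (deriv α) hα hα' s
      convert h using 1
      rw [hαeq]
      simp only [map_sub, map_smul, smul_eq_mul]
      linear_combination d * ha2
    · show HasDerivAt (fun u => B (β u) (deriv α u))
        (-(κ₂ s) * (B (deriv α s) (deriv α s) - d) + (b * d * κ₂ s) * (B (β s) (β s) - b)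
          - (a * d) * B (α s) (β s)) s
      have h := hkey β (deriv α) hβ hα' s
      convert h using 1
      rw [hβeq, hαeq]
      simp only [map_sub, map_smul, LinearMap.map_smul₂, LinearMap.smul_apply, smul_eq_mul,
        hBsymm (β s) (α s)]
      linear_combination (-(κ₂ s * d)) * hb2
  have hbnd : ∀ s, ‖x' s‖ ≤ (3 + 3 * |κ₂ s|) * ‖x s‖ := by
    intro s
    have hK0 : (0:ℝ) ≤ |κ₂ s| := abs_nonneg _
    have hX0 : (0:ℝ) ≤ ‖x s‖ := norm_nonneg _
    have h1 : |B (α s) (α s) - a| ≤ ‖x s‖ := by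
      simpa [hxdef, Real.norm_eq_abs] using norm_le_pi_norm (x s) 0
    have h2 : |B (β s) (β s) - b| ≤ ‖x s‖ := by
      simpa [hxdef, Real.norm_eq_abs] using norm_le_pi_norm (x s) 1
    have h3 : |B (deriv α s) (deriv α s) - d| ≤ ‖x s‖ := by
      simpa [hxdef, Real.norm_eq_abs] using norm_le_pi_norm (x s) 2
    have h4 : |B (α s) (β s)| ≤ ‖x s‖ := by
      simpa [hxdef, Real.norm_eq_abs] using norm_le_pi_norm (x s) 3
    have h5 : |B (α s) (deriv α s)| ≤ ‖x s‖ := by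
      simpa [hxdef, Real.norm_eq_abs] using norm_le_pi_norm (x s) 4
    have h6 : |B (β s) (deriv α s)| ≤ ‖x s‖ := by
      simpa [hxdef, Real.norm_eq_abs] using norm_le_pi_norm (x s) 5
    rw [pi_norm_le_iff_of_nonneg (by positivity)]
    intro i
    fin_cases i
    · show ‖2 * B (α s) (deriv α s)‖ ≤ _
      rw [Real.norm_eq_abs]
      simp only [abs_mul, abs_neg, abs_two, habs_a, habs_b, habs_d, one_mul, mul_one]
      nlinarith [mul_nonneg hK0 hX0]
    · show ‖-2 * κ₂ s * B (β s) (deriv α s)‖ ≤ _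
      rw [Real.norm_eq_abs]
      simp only [abs_mul, abs_neg, abs_two, habs_a, habs_b, habs_d, one_mul, mul_one]
      nlinarith [mul_le_mul_of_nonneg_left h6 hK0, mul_nonneg hK0 hX0]
    · show ‖2 * (b * d * κ₂ s) * B (β s) (deriv α s)
        - 2 * (a * d) * B (α s) (deriv α s)‖ ≤ _
      rw [Real.norm_eq_abs]
      refine le_trans (abs_sub _ _) ?_
      simp only [abs_mul, abs_neg, abs_two, habs_a, habs_b, habs_d, one_mul, mul_one]
      nlinarith [mul_le_mul_of_nonneg_left h6 hK0, mul_nonneg hK0 hX0]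
    · show ‖B (β s) (deriv α s) - κ₂ s * B (α s) (deriv α s)‖ ≤ _
      rw [Real.norm_eq_abs]
      refine le_trans (abs_sub _ _) ?_
      simp only [abs_mul, abs_neg, abs_two, habs_a, habs_b, habs_d, one_mul, mul_one]
      nlinarith [mul_le_mul_of_nonneg_left h5 hK0, mul_nonneg hK0 hX0]
    · show ‖(B (deriv α s) (deriv α s) - d) + (b * d * κ₂ s) * B (α s) (β s)
        - (a * d) * (B (α s) (α s) - a)‖ ≤ _
      rw [Real.norm_eq_abs]
      refine le_trans (abs_sub _ _) ?_
      refine le_trans (add_le_add_left (abs_add_le _ _) _) ?_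
      simp only [abs_mul, abs_neg, abs_two, habs_a, habs_b, habs_d, one_mul, mul_one]
      nlinarith [mul_le_mul_of_nonneg_left h4 hK0, mul_nonneg hK0 hX0]
    · show ‖-(κ₂ s) * (B (deriv α s) (deriv α s) - d)
        + (b * d * κ₂ s) * (B (β s) (β s) - b) - (a * d) * B (α s) (β s)‖ ≤ _
      rw [Real.norm_eq_abs]
      refine le_trans (abs_sub _ _) ?_
      refine le_trans (add_le_add_left (abs_add_le _ _) _) ?_
      simp only [abs_mul, abs_neg, abs_two, habs_a, habs_b, habs_d, one_mul, mul_one]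
      nlinarith [mul_le_mul_of_nonneg_left h2 hK0, mul_le_mul_of_nonneg_left h3 hK0,
        mul_nonneg hK0 hX0]
  have h0 : x 0 = 0 := by
    funext i
    fin_cases i
    · show B (α 0) (α 0) - a = 0
      rw [hαα]; ring
    · show B (β 0) (β 0) - b = 0
      rw [hββ]; ring
    · show B (deriv α 0) (deriv α 0) - d = 0
      rw [hα'α']; ring
    · show B (α 0) (β 0) = 0
      exact hαβ
    · show B (α 0) (deriv α 0) = 0
      exact hαα'
    · show B (β 0) (deriv α 0) = 0
      exact hβα'
  have hzero := gron_zero x x' (fun s => 3 + 3 * |κ₂ s|)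
    (continuous_const.add (continuous_const.mul hκc.abs)) hx hbnd h0
  intro t
  have hz := hzero t
  have e1 : B (α t) (α t) - a = 0 := by
    have := congrFun hz 0; simpa [hxdef] using this
  have e2 : B (β t) (β t) - b = 0 := by
    have := congrFun hz 1; simpa [hxdef] using this
  have e3 : B (deriv α t) (deriv α t) - d = 0 := by
    have := congrFun hz 2; simpa [hxdef] using this
  have e4 : B (α t) (β t) = 0 := by
    have := congrFun hz 3; simpa [hxdef] using this
  have e5 : B (α t) (deriv α t) = 0 := by
    have := congrFun hz 4; simpa [hxdef] using this
  have e6 : B (β t) (deriv α t) = 0 := by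
    have := congrFun hz 5; simpa [hxdef] using this
  exact ⟨by linarith, by linarith, by linarith, e4, e5, e6⟩
end

section
/- Let V be a finite-dimensional real vector space with a symmetric bilinear form ⟨·,·⟩, a ∈ {−1,0,1}, b, d ∈ {−1,1}, n ≥ 2 an integer, H, C ∈ ℝ. Let g : ℝ → ℝ be positive and differentiable with g′(t)² + d·g(t)²·(a + b·κ₁(t)²) = C for all t, where κ₁ = H + g^(−n) and κ₂ = H − (n−1)·g^(−n). Let α : ℝ → V be twice differentiable and β : ℝ → V differentiable with α″ = b·d·κ₂·β − a·d·α and β′ = −κ₂·α′, satisfying ⟨α(0),α(0)⟩ = a, ⟨β(0),β(0)⟩ = b, ⟨α′(0),α′(0)⟩ = d and ⟨α(0),β(0)⟩ = ⟨α(0),α′(0)⟩ = ⟨β(0),α′(0)⟩ = 0. Then ρ(t) := −g′(t)·α′(t) + b·d·g(t)·κ₁(t)·β(t) − d·a·g(t)·α(t) satisfies ⟨ρ(t),ρ(t)⟩ = d·C for every t ∈ ℝ. -/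
open Set

open Set

/-- If `f` solves an ODE whose RHS is locally (in time) uniformly Lipschitz in space,
`c` is an equilibrium, and `f 0 = c`, then `f ≡ c`. -/
lemma aux_ode_const {E : Type*} [NormedAddCommGroup E] [NormedSpace ℝ E]
    (f : ℝ → E) (v : ℝ → E → E) (c : E)
    (hd : ∀ t, HasDerivAt f (v t (f t)) t)
    (hc : ∀ t, v t c = 0)
    (hloc : ∀ R : ℝ, 0 < R → ∃ K : NNReal, ∀ t ∈ Icc (-R) R, LipschitzWith K (v t))
    (h0 : f 0 = c) : ∀ t, f t = c := by
  intro τ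
  set R : ℝ := |τ| + 1 with hR
  have hRpos : 0 < R := by positivity
  obtain ⟨K, hK⟩ := hloc R hRpos
  set cl : ℝ → ℝ := fun t => max (-R) (min R t) with hcl
  have hclmem : ∀ t, cl t ∈ Icc (-R) R := by
    intro t
    constructor
    · exact le_max_left _ _
    · exact max_le (by linarith) (min_le_left _ _)
  have hcleq : ∀ t ∈ Icc (-R) R, cl t = t := by
    rintro t ⟨h1, h2⟩
    simp only [hcl]
    rw [min_eq_right h2, max_eq_right h1]
  set v' : ℝ → E → E := fun t => v (cl t) with hv'
  have hlip : ∀ t, LipschitzOnWith K (v' t) univ :=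
    fun t => (hK _ (hclmem t)).lipschitzOnWith
  have key : EqOn f (fun _ => c) (Icc (-R) R) := by
    apply ODE_solution_unique_of_mem_Icc (v := v') (s := fun _ => univ) (fun t _ => hlip t)
      (t₀ := 0) (by constructor <;> linarith)
    · exact fun t _ => (hd t).continuousAt.continuousWithinAt
    · intro t ht
      have : v' t (f t) = v t (f t) := by
        simp only [hv']
        rw [hcleq t (Ioo_subset_Icc_self ht)]
      rw [this]
      exact hd t
    · exact fun _ _ => trivial
    · exact continuousOn_const
    · intro t ht
      have : v' t c = 0 := by
        simp only [hv']
        rw [hcleq t (Ioo_subset_Icc_self ht)]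
        exact hc t
      rw [this]
      exact hasDerivAt_const t c
    · exact fun _ _ => trivial
    · exact h0
  exact key ⟨by simp [hR]; linarith [neg_abs_le τ], by simp [hR]; linarith [le_abs_self τ]⟩

/-- The linear vector field satisfied by the six pairing functions. -/
def auxFv (a b d k : ℝ) (x : Fin 6 → ℝ) : Fin 6 → ℝ :=
  ![2 * x 2,
    a * x 4 + (-k) * x 2,
    (-(a * d)) * x 0 + (b * d * k) * x 1 + a * x 5,
    (-(2 * k)) * x 4,
    (-d) * x 1 + (b * d * k) * x 3 + (-k) * x 5,
    (2 * (b * d * k)) * x 4 + (-(2 * d)) * x 2]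

lemma auxFv_lip (a b d k K₀ : ℝ) (ha : |a| ≤ 1) (hb : |b| ≤ 1) (hd : |d| ≤ 1)
    (hk : |k| ≤ K₀) : LipschitzWith (2 + 2 * K₀).toNNReal (auxFv a b d k) := by
  have hK0 : 0 ≤ K₀ := le_trans (abs_nonneg k) hk
  apply LipschitzWith.of_dist_le_mul
  intro x y
  rw [dist_eq_norm, dist_eq_norm]
  have hsub : auxFv a b d k x - auxFv a b d k y = auxFv a b d k (x - y) := by
    funext i
    fin_cases i
    · show 2 * x 2 - 2 * y 2 = 2 * (x 2 - y 2); ring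
    · show (a * x 4 + (-k) * x 2) - (a * y 4 + (-k) * y 2)
        = a * (x 4 - y 4) + (-k) * (x 2 - y 2); ring
    · show ((-(a * d)) * x 0 + (b * d * k) * x 1 + a * x 5)
        - ((-(a * d)) * y 0 + (b * d * k) * y 1 + a * y 5)
        = (-(a * d)) * (x 0 - y 0) + (b * d * k) * (x 1 - y 1) + a * (x 5 - y 5); ring
    · show (-(2 * k)) * x 4 - (-(2 * k)) * y 4 = (-(2 * k)) * (x 4 - y 4); ring
    · show ((-d) * x 1 + (b * d * k) * x 3 + (-k) * x 5)
        - ((-d) * y 1 + (b * d * k) * y 3 + (-k) * y 5)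
        = (-d) * (x 1 - y 1) + (b * d * k) * (x 3 - y 3) + (-k) * (x 5 - y 5); ring
    · show ((2 * (b * d * k)) * x 4 + (-(2 * d)) * x 2)
        - ((2 * (b * d * k)) * y 4 + (-(2 * d)) * y 2)
        = (2 * (b * d * k)) * (x 4 - y 4) + (-(2 * d)) * (x 2 - y 2); ring
  rw [hsub]
  set z := x - y with hz
  rw [Real.coe_toNNReal _ (by positivity)]
  rw [pi_norm_le_iff_of_nonneg (by positivity)]
  have hn : (0:ℝ) ≤ ‖z‖ := norm_nonneg z
  have key : ∀ (c M : ℝ) (i : Fin 6), |c| ≤ M → |c * z i| ≤ M * ‖z‖ := by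
    intro c M i hc
    rw [abs_mul]
    exact mul_le_mul hc (norm_le_pi_norm z i) (abs_nonneg _) (le_trans (abs_nonneg c) hc)
  have tri3 : ∀ p q r : ℝ, |p + q + r| ≤ |p| + |q| + |r| := by
    intro p q r
    calc |p + q + r| ≤ |p + q| + |r| := abs_add_le _ _
      _ ≤ |p| + |q| + |r| := by linarith [abs_add_le p q]
  have c2' : |(2:ℝ)| ≤ 2 := by norm_num
  have cnk : |(-k)| ≤ K₀ := by rwa [abs_neg]
  have cad : |(-(a * d))| ≤ 1 := by
    rw [abs_neg, abs_mul]; exact mul_le_one₀ ha (abs_nonneg d) hd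
  have cbdk : |b * d * k| ≤ K₀ := by
    rw [abs_mul, abs_mul]
    calc |b| * |d| * |k| ≤ 1 * K₀ :=
          mul_le_mul (mul_le_one₀ hb (abs_nonneg d) hd) hk (abs_nonneg k) one_pos.le
      _ = K₀ := one_mul _
  have c2k : |(-(2 * k))| ≤ 2 * K₀ := by
    rw [abs_neg, abs_mul]; nlinarith [abs_nonneg k]
  have cnd : |(-d)| ≤ 1 := by rwa [abs_neg]
  have c2bdk : |2 * (b * d * k)| ≤ 2 * K₀ := by
    rw [abs_mul]; nlinarith [abs_nonneg (b * d * k)]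
  have c2d : |(-(2 * d))| ≤ 2 := by
    rw [abs_neg, abs_mul]; nlinarith [abs_nonneg d]
  have b0 : ‖2 * z 2‖ ≤ (2 + 2 * K₀) * ‖z‖ := by
    have := key 2 2 2 c2'
    rw [Real.norm_eq_abs]; nlinarith
  have b1 : ‖a * z 4 + (-k) * z 2‖ ≤ (2 + 2 * K₀) * ‖z‖ := by
    rw [Real.norm_eq_abs]
    have := abs_add_le (a * z 4) ((-k) * z 2)
    have h1 := key a 1 4 ha
    have h2 := key (-k) K₀ 2 cnk
    nlinarith
  have b2 : ‖(-(a * d)) * z 0 + (b * d * k) * z 1 + a * z 5‖ ≤ (2 + 2 * K₀) * ‖z‖ := by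
    rw [Real.norm_eq_abs]
    have := tri3 ((-(a * d)) * z 0) ((b * d * k) * z 1) (a * z 5)
    have h1 := key (-(a * d)) 1 0 cad
    have h2 := key (b * d * k) K₀ 1 cbdk
    have h3 := key a 1 5 ha
    nlinarith
  have b3 : ‖(-(2 * k)) * z 4‖ ≤ (2 + 2 * K₀) * ‖z‖ := by
    rw [Real.norm_eq_abs]
    have := key (-(2 * k)) (2 * K₀) 4 c2k
    nlinarith
  have b4 : ‖(-d) * z 1 + (b * d * k) * z 3 + (-k) * z 5‖ ≤ (2 + 2 * K₀) * ‖z‖ := by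
    rw [Real.norm_eq_abs]
    have := tri3 ((-d) * z 1) ((b * d * k) * z 3) ((-k) * z 5)
    have h1 := key (-d) 1 1 cnd
    have h2 := key (b * d * k) K₀ 3 cbdk
    have h3 := key (-k) K₀ 5 cnk
    nlinarith
  have b5 : ‖(2 * (b * d * k)) * z 4 + (-(2 * d)) * z 2‖ ≤ (2 + 2 * K₀) * ‖z‖ := by
    rw [Real.norm_eq_abs]
    have := abs_add_le ((2 * (b * d * k)) * z 4) ((-(2 * d)) * z 2)
    have h1 := key (2 * (b * d * k)) (2 * K₀) 4 c2bdk
    have h2 := key (-(2 * d)) 2 2 c2d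
    nlinarith
  intro i
  fin_cases i
  exacts [b0, b1, b2, b3, b4, b5]

/-- The identity `⟨η,η⟩ = d·C` (Theorem 6.2 (xiii)) along a profile curve:
with `g′² + d·g²·(a + b·κ₁²) = C` and `(α, β)` solving the profile ODE system
with orthonormal-type initial data, the map
`ρ(t) = −g′(t)·α′(t) + b·d·g(t)·κ₁(t)·β(t) − d·a·g(t)·α(t)`
satisfies `⟨ρ(t),ρ(t)⟩ = d·C` for all `t`. -/
theorem stmt_4 (V : Type*) [NormedAddCommGroup V] [NormedSpace ℝ V]
    [FiniteDimensional ℝ V]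
    (B : V →ₗ[ℝ] V →ₗ[ℝ] ℝ) (hBsymm : ∀ x y : V, B x y = B y x)
    (n : ℕ) (hn : 2 ≤ n) (H C a b d : ℝ)
    (ha : a = -1 ∨ a = 0 ∨ a = 1) (hb : b = -1 ∨ b = 1) (hd : d = -1 ∨ d = 1)
    (g : ℝ → ℝ) (hgpos : ∀ t, 0 < g t) (hg : Differentiable ℝ g)
    (κ₁ κ₂ : ℝ → ℝ)
    (hκ₁ : ∀ t, κ₁ t = H + g t ^ (-(n : ℤ)))
    (hκ₂ : ∀ t, κ₂ t = H - ((n : ℝ) - 1) * g t ^ (-(n : ℤ)))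
    (hfirstint : ∀ t : ℝ,
      (deriv g t) ^ 2 + d * (g t) ^ 2 * (a + b * (κ₁ t) ^ 2) = C)
    (α β : ℝ → V)
    (hα : Differentiable ℝ α) (hα' : Differentiable ℝ (deriv α))
    (hβ : Differentiable ℝ β)
    (hαeq : ∀ t : ℝ, deriv (deriv α) t = (b * d * κ₂ t) • β t - (a * d) • α t)
    (hβeq : ∀ t : ℝ, deriv β t = (-(κ₂ t)) • deriv α t)
    (hαα : B (α 0) (α 0) = a) (hββ : B (β 0) (β 0) = b)
    (hα'α' : B (deriv α 0) (deriv α 0) = d)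
    (hαβ : B (α 0) (β 0) = 0) (hαα' : B (α 0) (deriv α 0) = 0)
    (hβα' : B (β 0) (deriv α 0) = 0)
    (ρ : ℝ → V)
    (hρ : ∀ t : ℝ, ρ t = (-(deriv g t)) • deriv α t
      + (b * d * g t * κ₁ t) • β t - (d * a * g t) • α t) :
    ∀ t : ℝ, B (ρ t) (ρ t) = d * C := by
  -- basic scalar facts
  have ha3 : a ^ 3 = a := by rcases ha with rfl | rfl | rfl <;> norm_num
  have hb2 : b ^ 2 = 1 := by rcases hb with rfl | rfl <;> norm_num
  have hd2 : d ^ 2 = 1 := by rcases hd with rfl | rfl <;> norm_num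
  have haabs : |a| ≤ 1 := by rcases ha with rfl | rfl | rfl <;> norm_num
  have hbabs : |b| ≤ 1 := by rcases hb with rfl | rfl <;> norm_num
  have hdabs : |d| ≤ 1 := by rcases hd with rfl | rfl <;> norm_num
  -- derivative of pairings
  have keyD : ∀ (f h : ℝ → V) (f' h' : V) (t : ℝ), HasDerivAt f f' t → HasDerivAt h h' t →
      HasDerivAt (fun s => B (f s) (h s)) (B f' (h t) + B (f t) h') t := by
    set Bc : V →L[ℝ] V →L[ℝ] ℝ :=
      LinearMap.toContinuousLinearMap
        ((LinearMap.toContinuousLinearMap :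
          (V →ₗ[ℝ] ℝ) ≃ₗ[ℝ] (V →L[ℝ] ℝ)).toLinearMap ∘ₗ B) with hBc
    have hBcapp : ∀ x y, Bc x y = B x y := by intro x y; simp [hBc]
    intro f h f' h' t hf hh
    have h1 : HasDerivAt (fun s => Bc (f s)) (Bc f') t :=
      Bc.hasFDerivAt.comp_hasDerivAt t hf
    have h2 := h1.clm_apply hh
    simpa [hBcapp] using h2
  -- the six pairing functions
  set u : ℝ → Fin 6 → ℝ := fun t =>
    ![a * B (α t) (α t), a * B (α t) (β t), a * B (α t) (deriv α t),
      B (β t) (β t), B (β t) (deriv α t), B (deriv α t) (deriv α t)] with hu_def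
  have hu : ∀ t, HasDerivAt u (auxFv a b d (κ₂ t) (u t)) t := by
    intro t
    have hat : HasDerivAt α (deriv α t) t := (hα t).hasDerivAt
    have ha't : HasDerivAt (deriv α) (deriv (deriv α) t) t := (hα' t).hasDerivAt
    have hbt : HasDerivAt β (deriv β t) t := (hβ t).hasDerivAt
    have hbt' : HasDerivAt β ((-(κ₂ t)) • deriv α t) t := by rw [← hβeq t]; exact hbt
    have ha''t : HasDerivAt (deriv α) ((b * d * κ₂ t) • β t - (a * d) • α t) t := by
      rw [← hαeq t]; exact ha't
    apply hasDerivAt_pi.mpr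
    intro i
    fin_cases i
    · have H0 := (keyD α α (deriv α t) (deriv α t) t hat hat).const_mul a
      have e0 : a * (B (deriv α t) (α t) + B (α t) (deriv α t))
          = 2 * (a * B (α t) (deriv α t)) := by
        rw [hBsymm (deriv α t) (α t)]; ring
      show HasDerivAt (fun s => a * B (α s) (α s)) (2 * (a * B (α t) (deriv α t))) t
      exact e0 ▸ H0
    · have H1 := (keyD α β (deriv α t) ((-(κ₂ t)) • deriv α t) t hat hbt').const_mul a
      have e1 : a * (B (deriv α t) (β t) + B (α t) ((-(κ₂ t)) • deriv α t))
          = a * (B (β t) (deriv α t)) + (-(κ₂ t)) * (a * B (α t) (deriv α t)) := by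
        simp only [map_smul, smul_eq_mul]
        rw [hBsymm (deriv α t) (β t)]; ring
      show HasDerivAt (fun s => a * B (α s) (β s))
        (a * (B (β t)) (deriv α t) + -κ₂ t * (a * (B (α t)) (deriv α t))) t
      exact e1 ▸ H1
    · have H2 := (keyD α (deriv α) (deriv α t)
        ((b * d * κ₂ t) • β t - (a * d) • α t) t hat ha''t).const_mul a
      have e2 : a * (B (deriv α t) (deriv α t)
            + B (α t) ((b * d * κ₂ t) • β t - (a * d) • α t))
          = (-(a * d)) * (a * B (α t) (α t)) + (b * d * κ₂ t) * (a * B (α t) (β t))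
            + a * B (deriv α t) (deriv α t) := by
        simp only [map_sub, map_smul, smul_eq_mul]
        ring
      show HasDerivAt (fun s => a * B (α s) (deriv α s))
        (-(a * d) * (a * (B (α t)) (α t)) + b * d * κ₂ t * (a * (B (α t)) (β t))
          + a * (B (deriv α t)) (deriv α t)) t
      exact e2 ▸ H2
    · have H3 := keyD β β ((-(κ₂ t)) • deriv α t) ((-(κ₂ t)) • deriv α t) t hbt' hbt'
      have e3 : B ((-(κ₂ t)) • deriv α t) (β t) + B (β t) ((-(κ₂ t)) • deriv α t)
          = (-(2 * κ₂ t)) * B (β t) (deriv α t) := by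
        simp only [map_smul, LinearMap.smul_apply, smul_eq_mul]
        rw [hBsymm (deriv α t) (β t)]; ring
      show HasDerivAt (fun s => B (β s) (β s)) (-(2 * κ₂ t) * (B (β t)) (deriv α t)) t
      exact e3 ▸ H3
    · have H4 := keyD β (deriv α) ((-(κ₂ t)) • deriv α t)
        ((b * d * κ₂ t) • β t - (a * d) • α t) t hbt' ha''t
      have e4 : B ((-(κ₂ t)) • deriv α t) (deriv α t)
            + B (β t) ((b * d * κ₂ t) • β t - (a * d) • α t)
          = (-d) * (a * B (α t) (β t)) + (b * d * κ₂ t) * B (β t) (β t)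
            + (-(κ₂ t)) * B (deriv α t) (deriv α t) := by
        simp only [map_sub, map_smul, LinearMap.smul_apply, smul_eq_mul]
        rw [hBsymm (β t) (α t)]; ring
      show HasDerivAt (fun s => B (β s) (deriv α s))
        (-d * (a * (B (α t)) (β t)) + b * d * κ₂ t * (B (β t)) (β t)
          + -κ₂ t * (B (deriv α t)) (deriv α t)) t
      exact e4 ▸ H4
    · have H5 := keyD (deriv α) (deriv α) ((b * d * κ₂ t) • β t - (a * d) • α t)
        ((b * d * κ₂ t) • β t - (a * d) • α t) t ha''t ha''t
      have e5 : B ((b * d * κ₂ t) • β t - (a * d) • α t) (deriv α t)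
            + B (deriv α t) ((b * d * κ₂ t) • β t - (a * d) • α t)
          = (2 * (b * d * κ₂ t)) * B (β t) (deriv α t)
            + (-(2 * d)) * (a * B (α t) (deriv α t)) := by
        simp only [map_sub, map_smul, LinearMap.sub_apply, LinearMap.smul_apply, smul_eq_mul]
        rw [hBsymm (deriv α t) (β t), hBsymm (deriv α t) (α t)]; ring
      show HasDerivAt (fun s => B (deriv α s) (deriv α s))
        (2 * (b * d * κ₂ t) * (B (β t)) (deriv α t)
          + -(2 * d) * (a * (B (α t)) (deriv α t))) t
      exact e5 ▸ H5
  -- equilibrium point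
  set c₀ : Fin 6 → ℝ := ![a ^ 2, 0, 0, b, 0, d] with hc₀_def
  have hceq : ∀ t, auxFv a b d (κ₂ t) c₀ = 0 := by
    intro t
    funext i
    fin_cases i
    · show 2 * (0 : ℝ) = 0; norm_num
    · show a * (0 : ℝ) + (-(κ₂ t)) * 0 = 0; ring
    · show (-(a * d)) * a ^ 2 + (b * d * κ₂ t) * 0 + a * d = 0
      linear_combination (-d) * ha3
    · show (-(2 * κ₂ t)) * (0 : ℝ) = 0; ring
    · show (-d) * (0 : ℝ) + (b * d * κ₂ t) * b + (-(κ₂ t)) * d = 0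
      linear_combination d * κ₂ t * hb2
    · show (2 * (b * d * κ₂ t)) * (0 : ℝ) + (-(2 * d)) * 0 = 0; ring
  -- local Lipschitz bound
  have hκ₂cont : Continuous κ₂ := by
    have : κ₂ = fun t => H - ((n : ℝ) - 1) * g t ^ (-(n : ℤ)) := funext hκ₂
    rw [this]
    exact continuous_const.sub (continuous_const.mul
      (hg.continuous.zpow₀ _ (fun t => Or.inl (hgpos t).ne')))
  have hloc : ∀ R : ℝ, 0 < R → ∃ K : NNReal,
      ∀ t ∈ Icc (-R) R, LipschitzWith K (auxFv a b d (κ₂ t)) := by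
    intro R hR
    obtain ⟨K₀, hK₀⟩ := (isCompact_Icc (a := -R) (b := R)).exists_bound_of_continuousOn
      hκ₂cont.continuousOn
    refine ⟨(2 + 2 * K₀).toNNReal, fun t ht => ?_⟩
    exact auxFv_lip a b d (κ₂ t) K₀ haabs hbabs hdabs
      (by rw [← Real.norm_eq_abs]; exact hK₀ t ht)
  -- initial condition
  have hinit : u 0 = c₀ := by
    funext i
    fin_cases i
    · show a * B (α 0) (α 0) = a ^ 2; rw [hαα]; ring
    · show a * B (α 0) (β 0) = 0; rw [hαβ]; ring
    · show a * B (α 0) (deriv α 0) = 0; rw [hαα']; ring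
    · exact hββ
    · exact hβα'
    · exact hα'α'
  have conc : ∀ t, u t = c₀ :=
    aux_ode_const u (fun t => auxFv a b d (κ₂ t)) c₀ hu hceq hloc hinit
  -- conclusion
  intro τ
  have h0 : a * B (α τ) (α τ) = a ^ 2 := congrFun (conc τ) 0
  have h1 : a * B (α τ) (β τ) = 0 := congrFun (conc τ) 1
  have h2 : a * B (α τ) (deriv α τ) = 0 := congrFun (conc τ) 2
  have h3 : B (β τ) (β τ) = b := congrFun (conc τ) 3
  have h4 : B (β τ) (deriv α τ) = 0 := congrFun (conc τ) 4
  have h5 : B (deriv α τ) (deriv α τ) = d := congrFun (conc τ) 5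
  rw [hρ τ]
  simp only [map_add, map_sub, map_smul, map_neg, LinearMap.add_apply, LinearMap.sub_apply,
    LinearMap.smul_apply, LinearMap.neg_apply, smul_eq_mul]
  rw [hBsymm (deriv α τ) (β τ), hBsymm (deriv α τ) (α τ), hBsymm (β τ) (α τ)]
  linear_combination d * (hfirstint τ) + (deriv g τ) ^ 2 * h5
    + d ^ 2 * (g τ) ^ 2 * (κ₁ τ) ^ 2 * b ^ 2 * h3
    + d ^ 2 * (g τ) ^ 2 * (κ₁ τ) ^ 2 * b * hb2
    + d ^ 2 * (g τ) ^ 2 * a * h0 + d ^ 2 * (g τ) ^ 2 * ha3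
    + (-2) * b * d * (g τ) * (deriv g τ) * (κ₁ τ) * h4
    + 2 * d * (g τ) * (deriv g τ) * h2
    + (-2) * b * d ^ 2 * (g τ) ^ 2 * (κ₁ τ) * h1
end

section
/- Let V be a finite-dimensional real vector space with a symmetric bilinear form ⟨·,·⟩, a, b, d ∈ {−1,1}, n ≥ 2 an integer, H ∈ ℝ. Let g : ℝ → ℝ be positive and twice differentiable with g″(t) = −d·g(t)·(a + b·κ₁(t)·κ₂(t)) for all t, where κ₁ = H + g^(−n) and κ₂ = H − (n−1)·g^(−n). Let α : ℝ → V be twice differentiable and β : ℝ → V differentiable with α″ = b·d·κ₂·β − a·d·α and β′ = −κ₂·α′, satisfying ⟨α(0),α(0)⟩ = a, ⟨β(0),β(0)⟩ = b, ⟨α′(0),α′(0)⟩ = d and ⟨α(0),β(0)⟩ = ⟨α(0),α′(0)⟩ = ⟨β(0),α′(0)⟩ = 0. Set ρ₀ := −g′(0)·α′(0) + b·d·g(0)·κ₁(0)·β(0) − d·a·g(0)·α(0). Then for every t ∈ ℝ: ⟨ρ₀, α(t)⟩ = −d·g(t), ⟨ρ₀, β(t)⟩ = d·κ₁(t)·g(t),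 and ⟨ρ₀, α′(t)⟩ = −d·g′(t). -/
open Set

set_option maxHeartbeats 1000000

/-- The inner-product identities `⟨ρ₀,α(t)⟩ = −d·g(t)`, `⟨ρ₀,β(t)⟩ = d·κ₁(t)·g(t)`,
`⟨ρ₀,α′(t)⟩ = −d·g′(t)` used in the proofs of Theorems 7.2–7.5. -/
theorem stmt_5 (V : Type*) [NormedAddCommGroup V] [NormedSpace ℝ V]
    [FiniteDimensional ℝ V]
    (B : V →ₗ[ℝ] V →ₗ[ℝ] ℝ) (hBsymm : ∀ x y : V, B x y = B y x)
    (n : ℕ) (hn : 2 ≤ n) (H a b d : ℝ)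
    (ha : a = -1 ∨ a = 1) (hb : b = -1 ∨ b = 1) (hd : d = -1 ∨ d = 1)
    (g : ℝ → ℝ) (hgpos : ∀ t, 0 < g t)
    (hg : Differentiable ℝ g) (hg' : Differentiable ℝ (deriv g))
    (κ₁ κ₂ : ℝ → ℝ)
    (hκ₁ : ∀ t, κ₁ t = H + g t ^ (-(n : ℤ)))
    (hκ₂ : ∀ t, κ₂ t = H - ((n : ℝ) - 1) * g t ^ (-(n : ℤ)))
    (hg'' : ∀ t : ℝ, deriv (deriv g) t = -d * g t * (a + b * κ₁ t * κ₂ t))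
    (α β : ℝ → V)
    (hα : Differentiable ℝ α) (hα' : Differentiable ℝ (deriv α))
    (hβ : Differentiable ℝ β)
    (hαeq : ∀ t : ℝ, deriv (deriv α) t = (b * d * κ₂ t) • β t - (a * d) • α t)
    (hβeq : ∀ t : ℝ, deriv β t = (-(κ₂ t)) • deriv α t)
    (hαα : B (α 0) (α 0) = a) (hββ : B (β 0) (β 0) = b)
    (hα'α' : B (deriv α 0) (deriv α 0) = d)
    (hαβ : B (α 0) (β 0) = 0) (hαα' : B (α 0) (deriv α 0) = 0)
    (hβα' : B (β 0) (deriv α 0) = 0)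
    (ρ₀ : V)
    (hρ₀ : ρ₀ = (-(deriv g 0)) • deriv α 0
      + (b * d * g 0 * κ₁ 0) • β 0 - (d * a * g 0) • α 0) :
    ∀ t : ℝ, B ρ₀ (α t) = -d * g t ∧ B ρ₀ (β t) = d * κ₁ t * g t ∧
      B ρ₀ (deriv α t) = -d * deriv g t := by
  have ha2 : a * a = 1 := by rcases ha with h | h <;> rw [h] <;> norm_num
  have hb2 : b * b = 1 := by rcases hb with h | h <;> rw [h] <;> norm_num
  have hd2 : d * d = 1 := by rcases hd with h | h <;> rw [h] <;> norm_num
  have hgne : ∀ t, g t ≠ 0 := fun t => (hgpos t).ne'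
  -- continuous linear map x ↦ B ρ₀ x
  set φ : V →L[ℝ] ℝ := LinearMap.toContinuousLinearMap (B ρ₀) with hφ
  have hφa : ∀ x, φ x = B ρ₀ x := fun x => rfl
  -- the two candidate solutions
  set f : ℝ → ℝ × ℝ × ℝ := fun t => (φ (α t), φ (β t), φ (deriv α t)) with hf
  set y : ℝ → ℝ × ℝ × ℝ := fun t => (-d * g t, d * κ₁ t * g t, -d * deriv g t) with hy
  -- continuity of κ₁, κ₂
  have hκ₁c : Continuous κ₁ := by
    have : κ₁ = fun t => H + g t ^ (-(n : ℤ)) := funext hκ₁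
    rw [this]
    exact continuous_const.add (hg.continuous.zpow₀ _ (fun t => Or.inl (hgne t)))
  have hκ₂c : Continuous κ₂ := by
    have : κ₂ = fun t => H - ((n : ℝ) - 1) * g t ^ (-(n : ℤ)) := funext hκ₂
    rw [this]
    exact continuous_const.sub (continuous_const.mul
      (hg.continuous.zpow₀ _ (fun t => Or.inl (hgne t))))
  have key : ∀ t₁ : ℝ, f t₁ = y t₁ := by
    intro t₁
    set R : ℝ := |t₁| + 1 with hR
    have hRpos : 0 < R := by positivity
    -- clamp
    set c : ℝ → ℝ := fun s => max (-R) (min R s) with hc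
    have hcmem : ∀ s, c s ∈ Icc (-R) R := by
      intro s
      constructor
      · exact le_max_left _ _
      · exact max_le (by linarith) (min_le_left _ _)
    have hceq : ∀ s ∈ Ioo (-R) R, c s = s := by
      intro s hs
      rw [hc]
      simp only [min_eq_right hs.2.le, max_eq_right hs.1.le]
    -- bound for κ₂ on [-R, R]
    obtain ⟨M₀, hM₀⟩ := (isCompact_Icc (a := -R) (b := R)).exists_bound_of_continuousOn
      hκ₂c.continuousOn
    set M : ℝ := max M₀ 0 with hM
    have hMnn : 0 ≤ M := le_max_right _ _
    have hMb : ∀ s : ℝ, |κ₂ (c s)| ≤ M := by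
      intro s
      calc |κ₂ (c s)| = ‖κ₂ (c s)‖ := rfl
        _ ≤ M₀ := hM₀ _ (hcmem s)
        _ ≤ M := le_max_left _ _
    set K : NNReal := Real.toNNReal (M + 2) with hK
    have hKcoe : (K : ℝ) = M + 2 := Real.coe_toNNReal _ (by linarith)
    -- the vector field
    set F : ℝ → ℝ × ℝ × ℝ → ℝ × ℝ × ℝ := fun s p =>
      (p.2.2, -(κ₂ (c s)) * p.2.2, b * d * κ₂ (c s) * p.2.1 - a * d * p.1) with hF
    have hlip : ∀ s : ℝ, LipschitzOnWith K (F s) univ := by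
      intro s
      apply LipschitzWith.lipschitzOnWith
      apply LipschitzWith.of_dist_le_mul
      intro p q
      have h1 : |p.1 - q.1| ≤ dist p q := by
        rw [Prod.dist_eq]
        exact le_trans (le_of_eq (Real.dist_eq _ _).symm) (le_max_left _ _)
      have h2 : |p.2.1 - q.2.1| ≤ dist p q := by
        rw [Prod.dist_eq, Prod.dist_eq]
        exact le_trans (le_of_eq (Real.dist_eq _ _).symm)
          (le_trans (le_max_left _ _) (le_max_right _ _))
      have h3 : |p.2.2 - q.2.2| ≤ dist p q := by
        rw [Prod.dist_eq, Prod.dist_eq]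
        exact le_trans (le_of_eq (Real.dist_eq _ _).symm)
          (le_trans (le_max_right _ _) (le_max_right _ _))
      have hDnn : 0 ≤ dist p q := dist_nonneg
      have hκb := hMb s
      have habs : |a| = 1 := by rcases ha with h | h <;> rw [h] <;> norm_num
      have hbabs : |b| = 1 := by rcases hb with h | h <;> rw [h] <;> norm_num
      have hdabs : |d| = 1 := by rcases hd with h | h <;> rw [h] <;> norm_num
      rw [hKcoe, Prod.dist_eq, Prod.dist_eq]
      have e1 : dist (F s p).1 (F s q).1 ≤ (M + 2) * dist p q := by
        rw [Real.dist_eq]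
        simp only [hF]
        nlinarith [abs_nonneg (p.2.2 - q.2.2)]
      have e2 : dist (F s p).2.1 (F s q).2.1 ≤ (M + 2) * dist p q := by
        rw [Real.dist_eq]
        have heq2 : (F s p).2.1 - (F s q).2.1 = -(κ₂ (c s)) * (p.2.2 - q.2.2) := by
          simp only [hF]; ring
        rw [heq2, abs_mul, abs_neg]
        nlinarith [abs_nonneg (κ₂ (c s)), abs_nonneg (p.2.2 - q.2.2)]
      have e3 : dist (F s p).2.2 (F s q).2.2 ≤ (M + 2) * dist p q := by
        rw [Real.dist_eq]
        have heq3 : (F s p).2.2 - (F s q).2.2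
            = b * d * κ₂ (c s) * (p.2.1 - q.2.1) - a * d * (p.1 - q.1) := by
          simp only [hF]; ring
        rw [heq3]
        calc |b * d * κ₂ (c s) * (p.2.1 - q.2.1) - a * d * (p.1 - q.1)|
            ≤ |b * d * κ₂ (c s) * (p.2.1 - q.2.1)| + |a * d * (p.1 - q.1)| :=
              abs_sub _ _
          _ = |b| * |d| * |κ₂ (c s)| * |p.2.1 - q.2.1| + |a| * |d| * |p.1 - q.1| := by
              simp only [abs_mul]
          _ ≤ M * dist p q + dist p q := by
              rw [habs, hbabs, hdabs]
              nlinarith [abs_nonneg (p.2.1 - q.2.1), abs_nonneg (κ₂ (c s))]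
          _ ≤ (M + 2) * dist p q := by nlinarith
      exact max_le e1 (max_le e2 e3)
    -- f solves the ODE
    have hfd : ∀ s ∈ Ioo (-R) R, HasDerivAt f (F s (f s)) s := by
      intro s hs
      have d1 : HasDerivAt (fun t => φ (α t)) (φ (deriv α s)) s :=
        (φ.hasFDerivAt.comp_hasDerivAt s (hα s).hasDerivAt)
      have d2 : HasDerivAt (fun t => φ (β t)) (-(κ₂ s) * φ (deriv α s)) s := by
        have h := (φ.hasFDerivAt.comp_hasDerivAt s (hβ s).hasDerivAt)
        rwa [hβeq, map_smul, smul_eq_mul] at h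
      have d3 : HasDerivAt (fun t => φ (deriv α t))
          (b * d * κ₂ s * φ (β s) - a * d * φ (α s)) s := by
        have h := (φ.hasFDerivAt.comp_hasDerivAt s (hα' s).hasDerivAt)
        rwa [hαeq, map_sub, map_smul, map_smul, smul_eq_mul, smul_eq_mul] at h
      have h := d1.prodMk (d2.prodMk d3)
      convert h using 1
      simp only [hF, hceq s hs, hf]
    -- y solves the ODE
    have hyd : ∀ s ∈ Ioo (-R) R, HasDerivAt y (F s (y s)) s := by
      intro s hs
      have e1 : HasDerivAt (fun t => -d * g t) (-d * deriv g s) s :=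
        ((hg s).hasDerivAt).const_mul (-d)
      have e2 : HasDerivAt (fun t => d * κ₁ t * g t)
          (-(κ₂ s) * (-d * deriv g s)) s := by
        have hfun : (fun t => d * κ₁ t * g t)
            = fun t => d * H * g t + d * g t ^ (-(n : ℤ) + 1) := by
          funext t
          rw [hκ₁ t, zpow_add₀ (hgne t), zpow_one]
          ring
        rw [hfun]
        have hz : HasDerivAt (fun t => g t ^ (-(n : ℤ) + 1))
            (((-(n : ℤ) + 1 : ℤ) : ℝ) * g s ^ (-(n : ℤ) + 1 - 1) * deriv g s) s :=
          (hasDerivAt_zpow _ (g s) (Or.inl (hgne s))).comp s (hg s).hasDerivAt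
        have h := ((hg s).hasDerivAt.const_mul (d * H)).add (hz.const_mul d)
        refine h.congr_deriv ?_
        have hexp : -(n : ℤ) + 1 - 1 = -(n : ℤ) := by ring
        rw [hexp, hκ₂ s]
        push_cast
        ring
      have e3 : HasDerivAt (fun t => -d * deriv g t)
          (b * d * κ₂ s * (d * κ₁ s * g s) - a * d * (-d * g s)) s := by
        have h := ((hg' s).hasDerivAt).const_mul (-d)
        refine h.congr_deriv ?_
        rw [hg'' s]
        ring
      have h := e1.prodMk (e2.prodMk e3)
      convert h using 1
      simp only [hF, hceq s hs, hy]
    -- initial condition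
    have hα'α : B (deriv α 0) (α 0) = 0 := by rw [hBsymm]; exact hαα'
    have hα'β : B (deriv α 0) (β 0) = 0 := by rw [hBsymm]; exact hβα'
    have hβα : B (β 0) (α 0) = 0 := by rw [hBsymm]; exact hαβ
    have h0 : f 0 = y 0 := by
      have hexp : ∀ x : V, B ρ₀ x = -(deriv g 0) * B (deriv α 0) x
          + (b * d * g 0 * κ₁ 0) * B (β 0) x - (d * a * g 0) * B (α 0) x := by
        intro x
        rw [hρ₀]
        simp only [map_add, map_sub, map_smul, LinearMap.add_apply, LinearMap.sub_apply,
          LinearMap.smul_apply, smul_eq_mul]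
      simp only [hf, hy, hφa, Prod.mk.injEq]
      refine ⟨?_, ?_, ?_⟩
      · rw [hexp, hα'α, hβα, hαα]; linear_combination (-(d * g 0)) * ha2
      · rw [hexp, hα'β, hββ, hαβ]; linear_combination (d * g 0 * κ₁ 0) * hb2
      · rw [hexp, hα'α', hβα', hαα']; ring
    -- continuity
    have hfc : ContinuousOn f (Icc (-R) R) := by
      apply Continuous.continuousOn
      exact ((φ.continuous.comp hα.continuous).prodMk
        ((φ.continuous.comp hβ.continuous).prodMk (φ.continuous.comp hα'.continuous)))
    have hyc : ContinuousOn y (Icc (-R) R) := by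
      apply Continuous.continuousOn
      exact ((continuous_const.mul hg.continuous).prodMk
        (((continuous_const.mul hκ₁c).mul hg.continuous).prodMk
          (continuous_const.mul hg'.continuous)))
    have ht₀ : (0 : ℝ) ∈ Ioo (-R) R := by
      constructor <;> · simp only [hR]; linarith [abs_nonneg t₁]
    have ht₁ : t₁ ∈ Icc (-R) R := by
      constructor <;> · simp only [hR]; linarith [le_abs_self t₁, neg_abs_le t₁]
    exact ODE_solution_unique_of_mem_Icc (fun s _ => hlip s) ht₀ hfc hfd (fun _ _ => trivial)
      hyc hyd (fun _ _ => trivial) h0 ht₁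
  intro t
  have h := key t
  simp only [hf, hy, hφa, Prod.mk.injEq] at h
  exact ⟨h.1, h.2.1, h.2.2⟩
end

section
/- Let V be a finite-dimensional real vector space with a symmetric bilinear form ⟨·,·⟩, a, b, d ∈ {−1,1}, n ≥ 2 an integer, H, C ∈ ℝ with C ≠ 0. Let g : ℝ → ℝ be positive and twice differentiable with g′(t)² + d·g(t)²·(a + b·κ₁(t)²) = C and g″(t) = −d·g(t)·(a + b·κ₁(t)·κ₂(t)) for all t, where κ₁ = H + g^(−n), κ₂ = H − (n−1)·g^(−n). Let α : ℝ → V be twice differentiable and β : ℝ → V differentiable with α″ = b·d·κ₂·β − a·d·α and β′ = −κ₂·α′, satisfying ⟨α(0),α(0)⟩ = a, ⟨β(0),β(0)⟩ = b, ⟨α′(0),α′(0)⟩ = d and ⟨α(0),β(0)⟩ = ⟨α(0),α′(0)⟩ = ⟨β(0),α′(0)⟩ = 0. Set ρ₀ := −g′(0)·α′(0) + b·d·g(0)·κ₁(0)·β(0) − d·a·g(0)·α(0). Let y ∈ V satisfy ⟨y,y⟩ = d·|C|/C and ⟨y, α(t)⟩ = ⟨y, β(t)⟩ = ⟨y, α′(t)⟩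 = 0 for all t. Then φ(y,t) := (g(t)/√|C|)·y + α(t) + (g(t)/C)·ρ₀ satisfies ⟨φ(y,t), φ(y,t)⟩ = a for every t ∈ ℝ. -/
open Real Set

set_option maxHeartbeats 1000000

/-- Gronwall zero on the right half line. -/
lemma gronwall_zero_right (F K : ℝ → ℝ) (hF : Differentiable ℝ F) (hK : Continuous K)
    (hb : ∀ t, |deriv F t| ≤ K t * |F t|) (h0 : F 0 = 0) {t : ℝ} (ht : 0 ≤ t) : F t = 0 := by
  obtain ⟨M, hM⟩ := (isCompact_Icc (a := (0:ℝ)) (b := t)).exists_bound_of_continuousOn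
    hK.continuousOn
  have key := norm_le_gronwallBound_of_norm_deriv_right_le (f := F) (f' := deriv F)
    (δ := 0) (K := M) (ε := 0) (a := 0) (b := t)
    (hF.continuous.continuousOn)
    (fun x _ => (hF x).hasDerivAt.hasDerivWithinAt)
    (by simp [h0])
    (fun x hx => by
      have h1 := hb x
      have h2 : K x ≤ M := le_trans (le_abs_self _) (hM x ⟨hx.1, hx.2.le⟩)
      have h3 : K x * |F x| ≤ M * |F x| :=
        mul_le_mul_of_nonneg_right h2 (abs_nonneg _)
      simpa [Real.norm_eq_abs] using (h1.trans h3).trans_eq (by ring))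
  have := key t ⟨ht, le_refl t⟩
  rw [gronwallBound_ε0_δ0] at this
  simpa [Real.norm_eq_abs, abs_nonpos_iff] using this

lemma gronwall_zero (F K : ℝ → ℝ) (hF : Differentiable ℝ F) (hK : Continuous K)
    (hb : ∀ t, |deriv F t| ≤ K t * |F t|) (h0 : F 0 = 0) : ∀ t, F t = 0 := by
  intro t
  rcases le_or_gt 0 t with ht | ht
  · exact gronwall_zero_right F K hF hK hb h0 ht
  · have hG : Differentiable ℝ (fun s => F (-s)) := hF.comp (differentiable_neg)
    have := gronwall_zero_right (fun s => F (-s)) (fun s => K (-s)) hG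
      (hK.comp continuous_neg)
      (fun s => by
        rw [deriv_comp_neg]
        simpa using hb (-s))
      (by simpa using h0) (t := -t) (by linarith)
    simpa using this

lemma bilin_hasDerivAt {V : Type*} [NormedAddCommGroup V] [NormedSpace ℝ V]
    [FiniteDimensional ℝ V] (B : V →ₗ[ℝ] V →ₗ[ℝ] ℝ)
    {f u : ℝ → V} {f' u' : V} {t : ℝ}
    (hf : HasDerivAt f f' t) (hu : HasDerivAt u u' t) :
    HasDerivAt (fun s => B (f s) (u s)) (B f' (u t) + B (f t) u') t := by
  let e : (V →ₗ[ℝ] ℝ) →ₗ[ℝ] (V →L[ℝ] ℝ) :=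
    (LinearMap.toContinuousLinearMap : (V →ₗ[ℝ] ℝ) ≃ₗ[ℝ] (V →L[ℝ] ℝ)).toLinearMap
  let b2 : V →L[ℝ] V →L[ℝ] ℝ := LinearMap.toContinuousLinearMap (e.comp B)
  have hc : HasDerivAt (fun s => b2 (f s)) (b2 f') t :=
    (b2.hasFDerivAt.comp_hasDerivAt t hf)
  exact hc.clm_apply hu

lemma bound_alg (c s1 s2 : ℝ) (hs1 : s1 = -1 ∨ s1 = 1) (hs2 : s2 = -1 ∨ s2 = 1)
    (p1 p2 p3 p4 p5 p6 p7 p8 p9 : ℝ) :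
    |2 * (p1 * (2 * p2) + p2 * (p4 + s1 * c * p3 - s2 * p1) + p3 * (p5 - c * p2)
      + p4 * (2 * (s1 * c) * p5 - 2 * s2 * p2) + p5 * (s1 * c * p6 - s2 * p3 - c * p4)
      + p6 * (-(2 * c) * p5) + p7 * p8 + p8 * (s1 * c * p9 - s2 * p7) + p9 * (-(c * p8)))|
      ≤ (10 + 10 * |c|) * (p1^2 + p2^2 + p3^2 + p4^2 + p5^2 + p6^2 + p7^2 + p8^2 + p9^2) := by
  rw [abs_le]
  rcases le_or_gt 0 c with hc | hc
  · rw [abs_of_nonneg hc]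
    constructor <;>
    rcases hs1 with rfl | rfl <;> rcases hs2 with rfl | rfl <;>
    linarith [sq_nonneg (p1+p2), sq_nonneg (p1-p2), sq_nonneg (p2+p4), sq_nonneg (p2-p4),
      sq_nonneg (p3+p5), sq_nonneg (p3-p5), sq_nonneg (p7+p8), sq_nonneg (p7-p8),
      mul_nonneg hc (sq_nonneg (p2+p3)), mul_nonneg hc (sq_nonneg (p2-p3)),
      mul_nonneg hc (sq_nonneg (p4+p5)), mul_nonneg hc (sq_nonneg (p4-p5)),
      mul_nonneg hc (sq_nonneg (p5+p6)), mul_nonneg hc (sq_nonneg (p5-p6)),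
      mul_nonneg hc (sq_nonneg (p8+p9)), mul_nonneg hc (sq_nonneg (p8-p9)),
      mul_nonneg hc (sq_nonneg p1), mul_nonneg hc (sq_nonneg p2),
      mul_nonneg hc (sq_nonneg p3), mul_nonneg hc (sq_nonneg p4),
      mul_nonneg hc (sq_nonneg p5), mul_nonneg hc (sq_nonneg p6),
      mul_nonneg hc (sq_nonneg p7), mul_nonneg hc (sq_nonneg p8),
      mul_nonneg hc (sq_nonneg p9),
      sq_nonneg p1, sq_nonneg p2, sq_nonneg p3, sq_nonneg p4, sq_nonneg p5,
      sq_nonneg p6, sq_nonneg p7, sq_nonneg p8, sq_nonneg p9]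
  · rw [abs_of_neg hc]
    have hc' : 0 ≤ -c := by linarith
    constructor <;>
    rcases hs1 with rfl | rfl <;> rcases hs2 with rfl | rfl <;>
    linarith [sq_nonneg (p1+p2), sq_nonneg (p1-p2), sq_nonneg (p2+p4), sq_nonneg (p2-p4),
      sq_nonneg (p3+p5), sq_nonneg (p3-p5), sq_nonneg (p7+p8), sq_nonneg (p7-p8),
      mul_nonneg hc' (sq_nonneg (p2+p3)), mul_nonneg hc' (sq_nonneg (p2-p3)),
      mul_nonneg hc' (sq_nonneg (p4+p5)), mul_nonneg hc' (sq_nonneg (p4-p5)),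
      mul_nonneg hc' (sq_nonneg (p5+p6)), mul_nonneg hc' (sq_nonneg (p5-p6)),
      mul_nonneg hc' (sq_nonneg (p8+p9)), mul_nonneg hc' (sq_nonneg (p8-p9)),
      mul_nonneg hc' (sq_nonneg p1), mul_nonneg hc' (sq_nonneg p2),
      mul_nonneg hc' (sq_nonneg p3), mul_nonneg hc' (sq_nonneg p4),
      mul_nonneg hc' (sq_nonneg p5), mul_nonneg hc' (sq_nonneg p6),
      mul_nonneg hc' (sq_nonneg p7), mul_nonneg hc' (sq_nonneg p8),
      mul_nonneg hc' (sq_nonneg p9),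
      sq_nonneg p1, sq_nonneg p2, sq_nonneg p3, sq_nonneg p4, sq_nonneg p5,
      sq_nonneg p6, sq_nonneg p7, sq_nonneg p8, sq_nonneg p9]

/-- Theorem 7.3 (C ≠ 0 immersion lies in the quadric): the map
`φ(y,t) = (g(t)/√|C|)·y + α(t) + (g(t)/C)·ρ₀` satisfies `⟨φ(y,t),φ(y,t)⟩ = a`. -/
theorem stmt_6 (V : Type*) [NormedAddCommGroup V] [NormedSpace ℝ V]
    [FiniteDimensional ℝ V]
    (B : V →ₗ[ℝ] V →ₗ[ℝ] ℝ) (hBsymm : ∀ x y : V, B x y = B y x)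
    (n : ℕ) (hn : 2 ≤ n) (H C a b d : ℝ)
    (ha : a = -1 ∨ a = 1) (hb : b = -1 ∨ b = 1) (hd : d = -1 ∨ d = 1)
    (hC : C ≠ 0)
    (g : ℝ → ℝ) (hgpos : ∀ t, 0 < g t)
    (hg : Differentiable ℝ g) (hg' : Differentiable ℝ (deriv g))
    (κ₁ κ₂ : ℝ → ℝ)
    (hκ₁ : ∀ t, κ₁ t = H + g t ^ (-(n : ℤ)))
    (hκ₂ : ∀ t, κ₂ t = H - ((n : ℝ) - 1) * g t ^ (-(n : ℤ)))
    (hfirstint : ∀ t : ℝ,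
      (deriv g t) ^ 2 + d * (g t) ^ 2 * (a + b * (κ₁ t) ^ 2) = C)
    (hg'' : ∀ t : ℝ, deriv (deriv g) t = -d * g t * (a + b * κ₁ t * κ₂ t))
    (α β : ℝ → V)
    (hα : Differentiable ℝ α) (hα' : Differentiable ℝ (deriv α))
    (hβ : Differentiable ℝ β)
    (hαeq : ∀ t : ℝ, deriv (deriv α) t = (b * d * κ₂ t) • β t - (a * d) • α t)
    (hβeq : ∀ t : ℝ, deriv β t = (-(κ₂ t)) • deriv α t)
    (hαα : B (α 0) (α 0) = a) (hββ : B (β 0) (β 0) = b)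
    (hα'α' : B (deriv α 0) (deriv α 0) = d)
    (hαβ : B (α 0) (β 0) = 0) (hαα' : B (α 0) (deriv α 0) = 0)
    (hβα' : B (β 0) (deriv α 0) = 0)
    (ρ₀ : V)
    (hρ₀ : ρ₀ = (-(deriv g 0)) • deriv α 0
      + (b * d * g 0 * κ₁ 0) • β 0 - (d * a * g 0) • α 0)
    (y : V) (hyy : B y y = d * |C| / C)
    (hyα : ∀ t : ℝ, B y (α t) = 0) (hyβ : ∀ t : ℝ, B y (β t) = 0)
    (hyα' : ∀ t : ℝ, B y (deriv α t) = 0) :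
    ∀ t : ℝ,
      B ((g t / Real.sqrt |C|) • y + α t + (g t / C) • ρ₀)
        ((g t / Real.sqrt |C|) • y + α t + (g t / C) • ρ₀) = a := by
  have hne : ∀ s, g s ≠ 0 := fun s => (hgpos s).ne'
  have Hg : ∀ s, HasDerivAt g (deriv g s) s := fun s => (hg s).hasDerivAt
  have Hg' : ∀ s, HasDerivAt (deriv g) (deriv (deriv g) s) s := fun s => (hg' s).hasDerivAt
  have Hα : ∀ s, HasDerivAt α (deriv α s) s := fun s => (hα s).hasDerivAt
  have Hα' : ∀ s, HasDerivAt (deriv α) (deriv (deriv α) s) s := fun s => (hα' s).hasDerivAt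
  have Hβ : ∀ s, HasDerivAt β (deriv β s) s := fun s => (hβ s).hasDerivAt
  -- derivative of g * κ₁
  have hgK1 : ∀ s, HasDerivAt (fun u => g u * κ₁ u) (deriv g s * κ₂ s) s := by
    intro s
    have heq : (fun u => g u * κ₁ u) = fun u => H * g u + g u ^ ((1:ℤ) - n) := by
      funext u
      rw [hκ₁, show ((1:ℤ) - n) = 1 + -(n:ℤ) by ring, zpow_add₀ (hne u), zpow_one]
      ring
    rw [heq]
    have h2 : HasDerivAt (fun u => g u ^ ((1:ℤ) - n))
        ((((1:ℤ) - n : ℤ) : ℝ) * g s ^ ((1:ℤ) - n - 1) * deriv g s) s :=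
      (hasDerivAt_zpow ((1:ℤ) - n) (g s) (Or.inl (hne s))).comp s (Hg s)
    have h1 : HasDerivAt (fun u => H * g u) (H * deriv g s) s := (Hg s).const_mul H
    convert h1.add h2 using 1
    · rfl
    · rfl
    · rfl
    rw [hκ₂, show ((1:ℤ) - n - 1) = -(n:ℤ) by ring]
    push_cast
    ring
  -- continuity of κ₂
  have hκ₂c : Continuous κ₂ := by
    have : κ₂ = fun s => H - ((n:ℝ) - 1) * g s ^ (-(n:ℤ)) := funext hκ₂
    rw [this]
    exact continuous_const.sub (continuous_const.mul
      (hg.continuous.zpow₀ _ (fun s => Or.inl (hne s))))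
  set F : ℝ → ℝ := fun s =>
    (B (α s) (α s) - a)^2 + (B (α s) (deriv α s))^2 + (B (α s) (β s))^2
    + (B (deriv α s) (deriv α s) - d)^2 + (B (deriv α s) (β s))^2 + (B (β s) (β s) - b)^2
    + (B (α s) ρ₀ + d * g s)^2 + (B (deriv α s) ρ₀ + d * deriv g s)^2
    + (B (β s) ρ₀ - d * (g s * κ₁ s))^2 with hFdef
  have hFnonneg : ∀ s, 0 ≤ F s := by intro s; simp only [hFdef]; positivity
  have hFderiv : ∀ s, HasDerivAt F
      (2 * ((B (α s) (α s) - a) * (2 * (B (α s) (deriv α s)))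
      + (B (α s) (deriv α s)) * ((B (deriv α s) (deriv α s) - d)
          + (b*d) * κ₂ s * (B (α s) (β s)) - (a*d) * (B (α s) (α s) - a))
      + (B (α s) (β s)) * ((B (deriv α s) (β s)) - κ₂ s * (B (α s) (deriv α s)))
      + (B (deriv α s) (deriv α s) - d) * (2 * ((b*d) * κ₂ s) * (B (deriv α s) (β s))
          - 2 * (a*d) * (B (α s) (deriv α s)))
      + (B (deriv α s) (β s)) * ((b*d) * κ₂ s * (B (β s) (β s) - b)
          - (a*d) * (B (α s) (β s)) - κ₂ s * (B (deriv α s) (deriv α s) - d))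
      + (B (β s) (β s) - b) * (-(2 * κ₂ s) * (B (deriv α s) (β s)))
      + (B (α s) ρ₀ + d * g s) * (B (deriv α s) ρ₀ + d * deriv g s)
      + (B (deriv α s) ρ₀ + d * deriv g s) * ((b*d) * κ₂ s * (B (β s) ρ₀ - d * (g s * κ₁ s))
          - (a*d) * (B (α s) ρ₀ + d * g s))
      + (B (β s) ρ₀ - d * (g s * κ₁ s)) * (-(κ₂ s * (B (deriv α s) ρ₀ + d * deriv g s))))) s := by
    intro s
    have d1 := ((bilin_hasDerivAt B (Hα s) (Hα s)).sub_const a).pow 2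
    have d2 := (bilin_hasDerivAt B (Hα s) (Hα' s)).pow 2
    have d3 := (bilin_hasDerivAt B (Hα s) (Hβ s)).pow 2
    have d4 := ((bilin_hasDerivAt B (Hα' s) (Hα' s)).sub_const d).pow 2
    have d5 := (bilin_hasDerivAt B (Hα' s) (Hβ s)).pow 2
    have d6 := ((bilin_hasDerivAt B (Hβ s) (Hβ s)).sub_const b).pow 2
    have d7 := ((bilin_hasDerivAt B (Hα s) (hasDerivAt_const s ρ₀)).add
      ((Hg s).const_mul d)).pow 2
    have d8 := ((bilin_hasDerivAt B (Hα' s) (hasDerivAt_const s ρ₀)).add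
      ((Hg' s).const_mul d)).pow 2
    have d9 := ((bilin_hasDerivAt B (Hβ s) (hasDerivAt_const s ρ₀)).sub
      ((hgK1 s).const_mul d)).pow 2
    have total := (((((((d1.add d2).add d3).add d4).add d5).add d6).add d7).add d8).add d9
    rw [hFdef]
    convert total using 1
    · rfl
    · rfl
    · rfl
    rw [hαeq s, hβeq s, hg'' s]
    simp only [map_sub, map_add, map_smul, map_zero, map_neg, LinearMap.sub_apply,
      LinearMap.add_apply, LinearMap.smul_apply, LinearMap.neg_apply, smul_eq_mul, pow_one,
      add_zero, Pi.add_apply, Pi.sub_apply]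
    simp only [hBsymm (deriv α s) (α s), hBsymm (β s) (α s), hBsymm (β s) (deriv α s)]
    rcases ha with rfl|rfl <;> rcases hb with rfl|rfl <;> rcases hd with rfl|rfl <;> ring
  
  -- initial values
  have hα'β0 : B (deriv α 0) (β 0) = 0 := by rw [hBsymm]; exact hβα'
  have hα'α0 : B (deriv α 0) (α 0) = 0 := by rw [hBsymm]; exact hαα'
  have hβα0 : B (β 0) (α 0) = 0 := by rw [hBsymm]; exact hαβ
  have e1 : B (α 0) ρ₀ = -(d * g 0) := by
    rw [hρ₀]
    simp only [map_add, map_sub, map_smul, smul_eq_mul, hαα, hαβ, hαα', mul_zero, add_zero,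
      zero_sub, neg_mul, zero_add]
    rcases ha with rfl|rfl <;> rcases hd with rfl|rfl <;> ring
  have e2 : B (deriv α 0) ρ₀ = -(d * deriv g 0) := by
    rw [hρ₀]
    simp only [map_add, map_sub, map_smul, smul_eq_mul, hα'α', hα'β0, hα'α0, mul_zero, add_zero,
      sub_zero, neg_mul]
    ring
  have e3 : B (β 0) ρ₀ = d * (g 0 * κ₁ 0) := by
    rw [hρ₀]
    simp only [map_add, map_sub, map_smul, smul_eq_mul, hββ, hβα', hβα0, mul_zero, add_zero,
      sub_zero, zero_add, neg_mul, mul_one]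
    rcases hb with rfl|rfl <;> rcases hd with rfl|rfl <;> ring
  have hF0 : F 0 = 0 := by
    simp only [hFdef, hαα, hββ, hα'α', hαβ, hαα', hα'β0, e1, e2, e3]
    ring
  have hs1 : b*d = -1 ∨ b*d = 1 := by
    rcases hb with rfl|rfl <;> rcases hd with rfl|rfl <;> norm_num
  have hs2 : a*d = -1 ∨ a*d = 1 := by
    rcases ha with rfl|rfl <;> rcases hd with rfl|rfl <;> norm_num
  have hbound : ∀ s, |deriv F s| ≤ (10 + 10 * |κ₂ s|) * |F s| := by
    intro s
    rw [(hFderiv s).deriv, abs_of_nonneg (hFnonneg s)]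
    have := bound_alg (κ₂ s) (b*d) (a*d) hs1 hs2
      (B (α s) (α s) - a) (B (α s) (deriv α s)) (B (α s) (β s))
      (B (deriv α s) (deriv α s) - d) (B (deriv α s) (β s)) (B (β s) (β s) - b)
      (B (α s) ρ₀ + d * g s) (B (deriv α s) ρ₀ + d * deriv g s)
      (B (β s) ρ₀ - d * (g s * κ₁ s))
    calc _ ≤ _ := this
    _ = (10 + 10 * |κ₂ s|) * F s := by rw [hFdef]
  have hK : Continuous (fun s => 10 + 10 * |κ₂ s|) :=
    continuous_const.add (continuous_const.mul hκ₂c.abs)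
  have hFdiff : Differentiable ℝ F := fun s => (hFderiv s).differentiableAt
  have hF0all : ∀ s, F s = 0 := gronwall_zero F _ hFdiff hK hbound hF0
  have hsqs : ∀ s, (B (α s) (α s) - a)^2 = 0 ∧ (B (α s) ρ₀ + d * g s)^2 = 0 := by
    intro s
    have h := hF0all s
    simp only [hFdef] at h
    constructor <;>
      linarith [sq_nonneg (B (α s) (α s) - a), sq_nonneg (B (α s) (deriv α s)),
        sq_nonneg (B (α s) (β s)), sq_nonneg (B (deriv α s) (deriv α s) - d),
        sq_nonneg (B (deriv α s) (β s)), sq_nonneg (B (β s) (β s) - b),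
        sq_nonneg (B (α s) ρ₀ + d * g s), sq_nonneg (B (deriv α s) ρ₀ + d * deriv g s),
        sq_nonneg (B (β s) ρ₀ - d * (g s * κ₁ s))]
  have hP1 : ∀ s, B (α s) (α s) = a := by
    intro s
    have h := (hsqs s).1
    have := pow_eq_zero_iff (n := 2) (by norm_num) |>.mp h
    linarith [this]
  have hP7 : ∀ s, B (α s) ρ₀ = -(d * g s) := by
    intro s
    have h := (hsqs s).2
    have := pow_eq_zero_iff (n := 2) (by norm_num) |>.mp h
    linarith [this]
  -- the norm of ρ₀
  have hρρ : B ρ₀ ρ₀ = d * C := by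
    have hfi := hfirstint 0
    rw [hρ₀]
    simp only [map_add, map_sub, map_smul, LinearMap.add_apply, LinearMap.sub_apply,
      LinearMap.smul_apply, smul_eq_mul, hαα, hββ, hα'α', hαβ, hαα', hβα', hα'β0, hα'α0, hβα0,
      mul_zero, add_zero, sub_zero, zero_sub, zero_add, neg_mul, mul_one]
    rcases ha with rfl|rfl <;> rcases hb with rfl|rfl <;> rcases hd with rfl|rfl <;>
      (ring_nf; ring_nf at hfi; linarith [hfi])
  have hyρ : B y ρ₀ = 0 := by
    rw [hρ₀]
    simp [map_add, map_sub, map_smul, smul_eq_mul, hyα 0, hyβ 0, hyα' 0]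
  -- final computation
  intro t
  have hαty : B (α t) y = 0 := (hBsymm (α t) y).trans (hyα t)
  have hρy : B ρ₀ y = 0 := by rw [hBsymm]; exact hyρ
  have hραt : B ρ₀ (α t) = -(d * g t) := by rw [hBsymm]; exact hP7 t
  have hCpos : (0:ℝ) < |C| := abs_pos.mpr hC
  have hsq : Real.sqrt |C| * Real.sqrt |C| = |C| := Real.mul_self_sqrt (abs_nonneg C)
  have hsne : Real.sqrt |C| ≠ 0 := ne_of_gt (Real.sqrt_pos.mpr hCpos)
  simp only [map_add, map_smul, LinearMap.add_apply, LinearMap.smul_apply, smul_eq_mul,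
    hyy, hyα t, hαty, hyρ, hρy, hραt, hP7 t, hP1 t, hρρ]
  field_simp
  linear_combination (-(g t ^ 2 * d)) * hsq
end

section
/- Let n ≥ 2 be an integer and H ∈ ℝ. Set D = H²·n² + 4n − 4 (which is positive), q₁(H) = ((√D − H·(n−2))/(2(n−1)))^(−1/n) and r₁(H) = n·(H·√D + H²·n + 2n − 2) / (2^((n−2)/n) · (n−1)^(2(n−1)/n) · (√D − H·(n−2))^(2/n)). Then for every v > 0 one has v²·(1 + (H + v^(−n))²) ≥ r₁(H), with equality if and only if v = q₁(H). -/
set_option maxHeartbeats 2000000 in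
/-- Sphere case (a = b = d = 1): for every `v > 0`,
`v²·(1 + (H + v^(−n))²) ≥ r₁(H)`, with equality iff `v = q₁(H)`, where
`D = H²n² + 4n − 4`, `q₁(H) = ((√D − H(n−2))/(2(n−1)))^(−1/n)` and
`r₁(H) = n(H√D + H²n + 2n − 2)/(2^((n−2)/n)·(n−1)^(2(n−1)/n)·(√D − H(n−2))^(2/n))`. -/
theorem stmt_10 (n : ℕ) (hn : 2 ≤ n) (H : ℝ)
    (D : ℝ) (hD : D = H ^ 2 * (n : ℝ) ^ 2 + 4 * (n : ℝ) - 4)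
    (q₁ : ℝ)
    (hq₁ : q₁ = ((Real.sqrt D - H * ((n : ℝ) - 2)) / (2 * ((n : ℝ) - 1)))
      ^ (-(1 / (n : ℝ))))
    (r₁ : ℝ)
    (hr₁ : r₁ = (n : ℝ) * (H * Real.sqrt D + H ^ 2 * (n : ℝ) + 2 * (n : ℝ) - 2) /
      ((2 : ℝ) ^ (((n : ℝ) - 2) / (n : ℝ))
        * ((n : ℝ) - 1) ^ (2 * ((n : ℝ) - 1) / (n : ℝ))
        * (Real.sqrt D - H * ((n : ℝ) - 2)) ^ (2 / (n : ℝ)))) :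
    ∀ v : ℝ, 0 < v →
      r₁ ≤ v ^ 2 * (1 + (H + v ^ (-(n : ℤ))) ^ 2) ∧
      (v ^ 2 * (1 + (H + v ^ (-(n : ℤ))) ^ 2) = r₁ ↔ v = q₁) := by
  have hn2 : (2:ℝ) ≤ (n:ℝ) := by exact_mod_cast hn
  have hn0 : (0:ℝ) < (n:ℝ) := by linarith
  have hn0' : (n:ℝ) ≠ 0 := ne_of_gt hn0
  have hn1 : (0:ℝ) < (n:ℝ) - 1 := by linarith
  set s := Real.sqrt D with hsdef
  have hDpos : 0 < D := by rw [hD]; nlinarith [sq_nonneg (H*(n:ℝ))]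
  have hsq : s ^ 2 = D := Real.sq_sqrt hDpos.le
  have hsD : s ^ 2 = H ^ 2 * (n:ℝ) ^ 2 + 4 * (n:ℝ) - 4 := by rw [hsq, hD]
  have hspos : 0 < s := Real.sqrt_pos.mpr hDpos
  have hN : 0 < s - H * ((n:ℝ) - 2) := by
    nlinarith [hsD, hspos, sq_nonneg (s + H*((n:ℝ)-2)), sq_nonneg H, hn2]
  set u₀ : ℝ := (s - H * ((n:ℝ) - 2)) / (2 * ((n:ℝ) - 1)) with hu₀def
  have hden : (0:ℝ) < 2*((n:ℝ)-1) := by linarith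
  have hu0 : 0 < u₀ := div_pos hN hden
  have h2u : 2*((n:ℝ)-1)*u₀ = s - H*((n:ℝ)-2) := by
    rw [hu₀def]; field_simp
  have hiden : ((n:ℝ)-1)*u₀^2 + ((n:ℝ)-2)*H*u₀ = 1 + H^2 := by
    have h4 : (4*((n:ℝ)-1)) * (((n:ℝ)-1)*u₀^2 + ((n:ℝ)-2)*H*u₀)
        = (4*((n:ℝ)-1)) * (1 + H^2) := by
      linear_combination (2*((n:ℝ)-1)*u₀ + s + H*((n:ℝ)-2)) * h2u + hsq + hD
    exact mul_left_cancel₀ (by linarith : (4*((n:ℝ)-1)) ≠ 0) h4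
  have hsHn : 0 < s + H*(n:ℝ) := by
    nlinarith [hsD, hspos, sq_nonneg (s + H*(n:ℝ)), hn2]
  have hu0H : 0 < u₀ + H := by
    have e : u₀ + H = (s + H*(n:ℝ))/(2*((n:ℝ)-1)) := by
      rw [hu₀def]; field_simp; ring
    rw [e]; exact div_pos hsHn hden
  set C : ℝ := (n:ℝ)*u₀*(u₀+H) with hC
  have hCpos : 0 < C := mul_pos (mul_pos hn0 hu0) hu0H
  -- the key one-variable inequality
  have key : ∀ u : ℝ, 0 < u →
      C * (u^(2/(n:ℝ)) / u₀^(2/(n:ℝ))) ≤ 1 + (H+u)^2 ∧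
      (1 + (H+u)^2 = C * (u^(2/(n:ℝ)) / u₀^(2/(n:ℝ))) ↔ u = u₀) := by
    intro u hu
    have hw : 0 < u / u₀ := div_pos hu hu0
    set w := u / u₀ with hwdef
    have hwr : u^(2/(n:ℝ)) / u₀^(2/(n:ℝ)) = w^(2/(n:ℝ)) :=
      (Real.div_rpow hu.le hu0.le _).symm
    have hb : w^(2/(n:ℝ)) ≤ 1 + (2/(n:ℝ))*(w-1) := by
      have h := rpow_one_add_le_one_add_mul_self (s := w - 1) (by linarith)
        (p := 2/(n:ℝ)) (by positivity) (by rw [div_le_one hn0]; linarith)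
      have e : (1:ℝ) + (w-1) = w := by ring
      rwa [e] at h
    have hu' : u = u₀ * w := by rw [hwdef]; field_simp
    have hn2' : (n:ℝ)*(2/(n:ℝ)) = 2 := by field_simp
    have hid2 : 1 + (H+u)^2 = C*(1+(2/(n:ℝ))*(w-1)) + u₀^2*(w-1)^2 := by
      rw [hC]
      linear_combination (u + u₀*w + 2*H)*hu' - hiden - u₀*(u₀+H)*(w-1)*hn2'
    have h1 : C * w^(2/(n:ℝ)) ≤ C*(1+(2/(n:ℝ))*(w-1)) :=
      mul_le_mul_of_nonneg_left hb hCpos.le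
    have h2 : 0 ≤ u₀^2*(w-1)^2 := by positivity
    constructor
    · rw [hwr]; linarith [hid2]
    constructor
    · intro heq
      rw [hwr] at heq
      have hz : u₀^2*(w-1)^2 ≤ 0 := by linarith
      have h3 : (0:ℝ) < u₀^2 := pow_pos hu0 2
      have h4 : (w-1)^2 = 0 := by
        rcases lt_or_eq_of_le (sq_nonneg (w-1)) with hpos | heq0
        · exact absurd (mul_pos h3 hpos) (not_lt.mpr hz)
        · exact heq0.symm
      have h5 : w - 1 = 0 := by
        exact pow_eq_zero_iff (two_ne_zero) |>.mp h4
      rw [hu', show w = 1 by linarith, mul_one]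
    · intro h
      have hw1 : w = 1 := by rw [hwdef, h, div_self (ne_of_gt hu0)]
      rw [hwr, hw1, Real.one_rpow, mul_one, h]
      linear_combination hC - hiden
  -- rpow algebra: express r₁
  have hX : (0:ℝ) < (2:ℝ)^(2/(n:ℝ)) := Real.rpow_pos_of_pos two_pos _
  have hY : (0:ℝ) < ((n:ℝ)-1)^(2/(n:ℝ)) := Real.rpow_pos_of_pos hn1 _
  have hZ : (0:ℝ) < (s - H*((n:ℝ)-2))^(2/(n:ℝ)) := Real.rpow_pos_of_pos hN _
  have hU : (0:ℝ) < u₀^(2/(n:ℝ)) := Real.rpow_pos_of_pos hu0 _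
  have e1 : (2:ℝ) ^ (((n:ℝ)-2)/(n:ℝ)) = 2 / (2:ℝ)^(2/(n:ℝ)) := by
    rw [show ((n:ℝ)-2)/(n:ℝ) = 1 - 2/(n:ℝ) by field_simp,
      Real.rpow_sub (by norm_num), Real.rpow_one]
  have e2 : ((n:ℝ)-1) ^ (2*((n:ℝ)-1)/(n:ℝ))
      = ((n:ℝ)-1)^2 / ((n:ℝ)-1)^(2/(n:ℝ)) := by
    rw [show 2*((n:ℝ)-1)/(n:ℝ) = ((2:ℕ):ℝ) - 2/(n:ℝ) by push_cast; field_simp,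
      Real.rpow_sub hn1, Real.rpow_natCast]
  have e3 : u₀ ^ (2/(n:ℝ))
      = (s - H*((n:ℝ)-2)) ^ (2/(n:ℝ)) / ((2:ℝ)^(2/(n:ℝ)) * ((n:ℝ)-1)^(2/(n:ℝ))) := by
    rw [hu₀def, Real.div_rpow hN.le hden.le, Real.mul_rpow (by norm_num) hn1.le]
  have hval : 2*((n:ℝ)-1)^2*u₀*(u₀+H) = H*s + H^2*(n:ℝ) + 2*(n:ℝ) - 2 := by
    linear_combination (((2*((n:ℝ)-1)*u₀ + (s - H*((n:ℝ)-2)))/2) + ((n:ℝ)-1)*H) * h2u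
      + (1/2)*hsq + (1/2)*hD
  have hXY : (2:ℝ)^(((n:ℝ)-2)/(n:ℝ)) * ((n:ℝ)-1)^(2*((n:ℝ)-1)/(n:ℝ))
      * (s-H*((n:ℝ)-2))^(2/(n:ℝ)) = 2*((n:ℝ)-1)^2 * u₀^(2/(n:ℝ)) := by
    rw [e1, e2, e3]
    field_simp
  have hr₁' : r₁ = C / u₀ ^ (2/(n:ℝ)) := by
    rw [hr₁, hXY, hC]
    rw [div_eq_div_iff (by positivity) (ne_of_gt hU)]
    linear_combination (-((n:ℝ) * u₀^(2/(n:ℝ)))) * hval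
  intro v hv
  have hupos : 0 < v ^ (-(n : ℤ)) := zpow_pos hv _
  set u := v ^ (-(n : ℤ)) with hudef
  have hur : u = v ^ (-(n:ℝ)) := by
    rw [hudef, show (-(n:ℝ)) = ((-(n:ℤ) : ℤ) : ℝ) by push_cast; ring,
      Real.rpow_intCast]
  have hvu : v^2 * u ^ (2/(n:ℝ)) = 1 := by
    have h1 : (v ^ (-(n:ℝ))) ^ (2/(n:ℝ)) = v ^ ((-(n:ℝ)) * (2/(n:ℝ))) :=
      (Real.rpow_mul hv.le _ _).symm
    have h2 : (-(n:ℝ)) * (2/(n:ℝ)) = ((-2:ℤ):ℝ) := by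
      push_cast
      field_simp
    rw [hur, h1, h2, Real.rpow_intCast]
    have h3 : v ^ (-2:ℤ) = (v^2)⁻¹ := by
      rw [zpow_neg]
      norm_cast
    rw [h3]
    exact mul_inv_cancel₀ (pow_ne_zero 2 (ne_of_gt hv))
  have hrv : r₁ = v^2 * (C * (u^(2/(n:ℝ)) / u₀^(2/(n:ℝ)))) := by
    rw [hr₁']
    have : v^2 * (C * (u^(2/(n:ℝ)) / u₀^(2/(n:ℝ))))
        = (v^2 * u^(2/(n:ℝ))) * C / u₀^(2/(n:ℝ)) := by ring
    rw [this, hvu, one_mul]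
  obtain ⟨hle, hiff⟩ := key u hupos
  have hq₁pos : 0 < q₁ := by
    rw [hq₁]; exact Real.rpow_pos_of_pos hu0 _
  have hq : q₁ ^ (-(n : ℤ)) = u₀ := by
    rw [← Real.rpow_intCast q₁ (-(n:ℤ)), hq₁, ← Real.rpow_mul hu0.le]
    rw [show (-(1/(n:ℝ))) * ((-(n:ℤ) : ℤ):ℝ) = 1 by push_cast; field_simp]
    exact Real.rpow_one u₀
  constructor
  · calc r₁ = v^2 * (C * (u^(2/(n:ℝ)) / u₀^(2/(n:ℝ)))) := hrv
      _ ≤ v^2 * (1 + (H+u)^2) := by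
          exact mul_le_mul_of_nonneg_left hle (sq_nonneg v)
  · constructor
    · intro heq
      have h1 : 1 + (H+u)^2 = C * (u^(2/(n:ℝ)) / u₀^(2/(n:ℝ))) := by
        have h2 : v^2 * (1 + (H+u)^2) = v^2 * (C * (u^(2/(n:ℝ)) / u₀^(2/(n:ℝ)))) := by
          rw [heq, hrv]
        exact mul_left_cancel₀ (pow_ne_zero 2 (ne_of_gt hv)) h2
      have hu₀eq : u = u₀ := hiff.mp h1
      -- v ^ (-n) = q₁ ^ (-n) implies v = q₁
      have h3 : v ^ (-(n:ℤ)) = q₁ ^ (-(n:ℤ)) := by rw [← hudef, hu₀eq, hq]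
      have h4 : v ^ n = q₁ ^ n := by
        have := h3
        rw [zpow_neg, zpow_neg, inv_inj, zpow_natCast, zpow_natCast] at this
        exact this
      exact pow_left_strictMonoOn₀ (n := n) (by omega)
        |>.injOn (le_of_lt hv) (le_of_lt hq₁pos) h4
    · intro h
      have hu₀eq : u = u₀ := by rw [hudef, h, hq]
      rw [hrv, hiff.mpr hu₀eq]
end

section
/- Let n > 2 be an integer and H, C ∈ ℝ. Suppose there exists a differentiable nonconstant function g : ℝ → ℝ with g(t) > 0 and g′(t)² = C − g(t)²·(1 + (H + g(t)^(−n))²) for all t ∈ ℝ. Then C > r₁(H), where r₁(H) = n·(H·√D + H²·n + 2n − 2) / (2^((n−2)/n) · (n−1)^(2(n−1)/n) · (√D − H·(n−2))^(2/n)) with D = H²·n² + 4n − 4. -/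
set_option maxHeartbeats 1000000

lemma amgm1 (N t : ℝ) (hN : 3 ≤ N) (ht : 0 < t) :
    N ≤ (N - 2) * t ^ (2:ℝ) + 2 * t ^ (2 - N) := by
  have hN0 : N ≠ 0 := by linarith
  have hNpos : (0:ℝ) < N := by linarith
  have h := Real.geom_mean_le_arith_mean2_weighted
    (w₁ := (N-2)/N) (w₂ := 2/N) (p₁ := t ^ (2:ℝ)) (p₂ := t ^ (2-N))
    (div_nonneg (by linarith) hNpos.le) (div_nonneg (by norm_num) hNpos.le)
    (Real.rpow_nonneg ht.le 2) (Real.rpow_nonneg ht.le (2-N))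
    (by field_simp; ring)
  rw [← Real.rpow_mul ht.le, ← Real.rpow_mul ht.le, ← Real.rpow_add ht] at h
  have he : 2 * ((N-2)/N) + (2-N) * (2/N) = 0 := by field_simp; ring
  rw [he, Real.rpow_zero] at h
  calc N = N * 1 := by ring
  _ ≤ N * ((N-2)/N * t^(2:ℝ) + 2/N * t^(2-N)) := mul_le_mul_of_nonneg_left h hNpos.le
  _ = (N - 2) * t ^ (2:ℝ) + 2 * t ^ (2 - N) := by field_simp

lemma amgm2 (N t : ℝ) (hN : 3 ≤ N) (ht : 0 < t) :
    (2*N - 2) * t ^ (2 - N) ≤ (N - 2) * t ^ (2 - 2*N) + N := by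
  have hM : (0:ℝ) < 2*N - 2 := by linarith
  have h := Real.geom_mean_le_arith_mean2_weighted
    (w₁ := (N-2)/(2*N-2)) (w₂ := N/(2*N-2)) (p₁ := t ^ (2-2*N)) (p₂ := 1)
    (div_nonneg (by linarith) hM.le) (div_nonneg (by linarith) hM.le)
    (Real.rpow_nonneg ht.le (2-2*N)) (zero_le_one)
    (by rw [← add_div, div_eq_one_iff_eq hM.ne']; ring)
  rw [← Real.rpow_mul ht.le, Real.one_rpow, mul_one] at h
  have he : (2-2*N) * ((N-2)/(2*N-2)) = 2 - N := by rw [mul_div_assoc', div_eq_iff hM.ne']; ring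
  rw [he] at h
  calc (2*N-2) * t^(2-N) ≤ (2*N-2) * ((N-2)/(2*N-2) * t^(2-2*N) + N/(2*N-2) * 1) :=
        mul_le_mul_of_nonneg_left h hM.le
  _ = (N - 2) * t ^ (2 - 2*N) + N := by
    field_simp; exact mul_div_cancel_left₀ _ (by linarith : (N-1:ℝ) ≠ 0)


lemma key (n : ℕ) (hn : 2 < n) (H D r₁ : ℝ)
    (hD : D = H ^ 2 * (n : ℝ) ^ 2 + 4 * (n : ℝ) - 4)
    (hr₁ : r₁ = (n : ℝ) * (H * Real.sqrt D + H ^ 2 * (n : ℝ) + 2 * (n : ℝ) - 2) /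
      ((2 : ℝ) ^ (((n : ℝ) - 2) / (n : ℝ))
        * ((n : ℝ) - 1) ^ (2 * ((n : ℝ) - 1) / (n : ℝ))
        * (Real.sqrt D - H * ((n : ℝ) - 2)) ^ (2 / (n : ℝ))))
    (x : ℝ) (hx : 0 < x) :
    r₁ ≤ x ^ 2 * (1 + (H + x ^ (-(n : ℤ))) ^ 2) := by
  set N : ℝ := (n : ℝ) with hNdef
  have hN : 3 ≤ N := by have h3 : 3 ≤ n := hn; rw [hNdef]; exact_mod_cast h3
  have hNpos : (0:ℝ) < N := by linarith
  have hN0 : N ≠ 0 := hNpos.ne'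
  have hDpos : 0 < D := by
    have hh : 0 ≤ H^2 * N^2 := by positivity
    linarith
  set sD : ℝ := Real.sqrt D with hsDdef
  have hsD : sD ^ 2 = D := Real.sq_sqrt hDpos.le
  have hsDpos : 0 < sD := Real.sqrt_pos.mpr hDpos
  set S : ℝ := sD - H * (N - 2) with hSdef
  have hSpos : 0 < S := by
    rcases le_or_gt (H * (N - 2)) 0 with h | h
    · rw [hSdef]; linarith
    · have h2 : (H * (N-2)) ^ 2 < D := by nlinarith [sq_nonneg H]
      have := (Real.lt_sqrt h.le).mpr h2
      rw [hSdef]; linarith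
  have hS0 : S ≠ 0 := hSpos.ne'
  set y : ℝ := 2 * (N - 1) / S with hydef
  have hy : 0 < y := div_pos (by linarith) hSpos
  clear_value N sD S y
  -- polynomial identities
  have hkeyS : 4*(N-1)*(1+H^2) + 2*H*(2-N)*S - S^2 = 0 := by
    rw [hSdef]; linear_combination -hsD - hD
  have hkeyQ : 4*(N-1)^2*(1+H^2) + 4*H*(N-1)*S + S^2 = N*(sD+H*N)*S := by
    rw [hSdef]; linear_combination (1-N)*hsD + (1-N)*hD
  have hkeyE : S*(sD+H*N) = 2*(H*sD+H^2*N+2*N-2) := by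
    rw [hSdef]; linear_combination hsD + hD
  have hq : (1 + H^2) * y^2 + H * (2 - N) * y - (N - 1) = 0 := by
    have h2 : (1 + H^2) * y^2 + H * (2 - N) * y - (N - 1)
        = (N-1)/S^2 * (4*(N-1)*(1+H^2) + 2*H*(2-N)*S - S^2) := by
      rw [hydef]; field_simp; ring
    rw [h2, hkeyS, mul_zero]
  have hQ : (1 + H^2) * y^2 + 2*H*y + 1 = N * (sD + H * N) / S := by
    have h2 : (1 + H^2) * y^2 + 2*H*y + 1
        = (1/S^2) * (4*(N-1)^2*(1+H^2) + 4*H*(N-1)*S + S^2) := by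
      rw [hydef]; field_simp; ring
    rw [h2, hkeyQ]; field_simp
  -- setup t, a, b, c
  set x0 : ℝ := y ^ ((1:ℝ)/N) with hx0def
  have hx0 : 0 < x0 := Real.rpow_pos_of_pos hy _
  set t : ℝ := x / x0 with htdef
  have ht : 0 < t := div_pos hx hx0
  clear_value x0 t
  have hxs : x = x0 * t := by rw [htdef]; field_simp
  have hsplit : ∀ e : ℝ, x ^ e = y ^ (e/N) * t ^ e := by
    intro e
    rw [hxs, Real.mul_rpow hx0.le ht.le, hx0def, ← Real.rpow_mul hy.le]
    congr 2
    field_simp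
  set a : ℝ := (1+H^2) * y^((2:ℝ)/N) with hadef
  set b : ℝ := 2*H * y^((2-N)/N) with hbdef
  set c : ℝ := y^((2-2*N)/N) with hcdef
  have ha : 0 < a := by
    rw [hadef]
    exact mul_pos (by positivity) (Real.rpow_pos_of_pos hy _)
  have hc : 0 < c := Real.rpow_pos_of_pos hy _
  clear_value a b c
  -- rewrite target
  have hz : x ^ (-(n : ℤ)) = x ^ (-N) := by
    rw [← Real.rpow_intCast x (-(n:ℤ))]
    congr 1
    push_cast
    rw [hNdef]
  have e1 : x^((2:ℝ)) * x^(-N) = x^(2-N) := by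
    rw [← Real.rpow_add hx]; ring_nf
  have e2 : x^((2:ℝ)) * (x^(-N) * x^(-N)) = x^(2-2*N) := by
    rw [← Real.rpow_add hx, ← Real.rpow_add hx]; ring_nf
  have hFx : x ^ 2 * (1 + (H + x ^ (-(n : ℤ))) ^ 2)
      = (1+H^2) * x^((2:ℝ)) + 2*H * x^(2-N) + x^(2-2*N) := by
    rw [hz, ← e1, ← e2, show x ^ 2 = x ^ ((2:ℕ):ℝ) by rw [Real.rpow_natCast]]
    push_cast
    ring
  have hFt : (1+H^2) * x^((2:ℝ)) + 2*H * x^(2-N) + x^(2-2*N)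
      = a * t^((2:ℝ)) + b * t^(2-N) + c * t^(2-2*N) := by
    rw [hsplit 2, hsplit (2-N), hsplit (2-2*N), hadef, hbdef, hcdef]
    ring
  -- y-power factorizations
  have f1 : y^((2:ℝ)/N) = y^((2-2*N)/N) * y^2 := by
    rw [show (2:ℝ)/N = (2-2*N)/N + 2 by field_simp; ring, Real.rpow_add hy,
      show (2:ℝ) = ((2:ℕ):ℝ) by norm_num, Real.rpow_natCast]
  have f2 : y^((2-N)/N) = y^((2-2*N)/N) * y := by
    rw [show (2-N)/N = (2-2*N)/N + 1 by field_simp; try ring, Real.rpow_add hy,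
      Real.rpow_one]
  -- stationarity
  have hstat : 2*a + (2-N)*b + (2-2*N)*c = 0 := by
    rw [hadef, hbdef, hcdef, f1, f2]
    linear_combination (2 * y^((2-2*N)/N)) * hq
  -- closed form: a + b + c = r₁
  set P2 : ℝ := (2:ℝ)^((2-N)/N) with hP2def
  set P3 : ℝ := (N-1)^((2-2*N)/N) with hP3def
  set P4 : ℝ := S^((2:ℝ)/N) with hP4def
  have hP2 : 0 < P2 := Real.rpow_pos_of_pos two_pos _
  have hP3 : 0 < P3 := Real.rpow_pos_of_pos (by linarith) _
  have hP4 : 0 < P4 := Real.rpow_pos_of_pos hSpos _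
  clear_value P2 P3 P4
  have g1 : y^((2-2*N)/N) = (2*(N-1))^((2-2*N)/N) / S^((2-2*N)/N) := by
    rw [hydef, Real.div_rpow (by linarith) hSpos.le]
  have g2 : (2*(N-1))^((2-2*N)/N) = P2/2 * P3 := by
    rw [Real.mul_rpow (by norm_num) (by linarith), hP3def,
      show (2-2*N)/N = (2-N)/N + (-1) by field_simp; try ring,
      Real.rpow_add two_pos, Real.rpow_neg_one, hP2def]
    ring
  have g4 : S^((2-2*N)/N) = P4 / S^2 := by
    rw [show (2-2*N)/N = (2:ℝ)/N + (-((2:ℕ):ℝ)) by push_cast; field_simp; try ring,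
      Real.rpow_add hSpos, Real.rpow_neg hSpos.le, Real.rpow_natCast, hP4def]
    ring
  have hr₁' : r₁ = N*(H*sD+H^2*N+2*N-2) * (P2 * P3 / P4) := by
    rw [hr₁, show (N-2)/N = -((2-N)/N) by ring, show 2*(N-1)/N = -((2-2*N)/N) by ring,
      Real.rpow_neg (by norm_num : (0:ℝ) ≤ 2), Real.rpow_neg (by linarith : (0:ℝ) ≤ N-1),
      ← hP2def, ← hP3def]
    field_simp
  have habc : a + b + c = r₁ := by
    have hy2 : y^((2-2*N)/N) = P2/2 * P3 * (S^2 / P4) := by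
      rw [g1, g2, g4]; field_simp
    have hsum : a + b + c = y^((2-2*N)/N) * ((1 + H^2) * y^2 + 2*H*y + 1) := by
      rw [hadef, hbdef, hcdef, f1, f2]; ring
    rw [hsum, hQ, hy2, hr₁']
    have h2 : S ^ 2 / S = S := by field_simp [sq]
    calc P2 / 2 * P3 * (S ^ 2 / P4) * (N * (sD + H * N) / S)
        = (S^2/S) * (sD + H*N) * (N * P2 * P3) / (2 * P4) := by ring
    _ = S * (sD + H * N) * (N * P2 * P3) / (2 * P4) := by rw [h2]
    _ = 2 * (H * sD + H ^ 2 * N + 2 * N - 2) * (N * P2 * P3) / (2 * P4) := by rw [hkeyE]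
    _ = N * (H * sD + H ^ 2 * N + 2 * N - 2) * (P2 * P3 / P4) := by
        field_simp
  -- main inequality
  have hB1 : 0 ≤ (N-2)*t^((2:ℝ)) + 2*t^(2-N) - N := by linarith [amgm1 N t hN ht]
  have hB2 : 0 ≤ (N-2)*t^(2-2*N) - (2*N-2)*t^(2-N) + N := by linarith [amgm2 N t hN ht]
  have hid : (N-2)*((a*t^((2:ℝ)) + b*t^(2-N) + c*t^(2-2*N)) - (a+b+c))
      = a*((N-2)*t^((2:ℝ)) + 2*t^(2-N) - N)
        + c*((N-2)*t^(2-2*N) - (2*N-2)*t^(2-N) + N)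
        - (t^(2-N) - 1)*(2*a + (2-N)*b + (2-2*N)*c) := by ring
  rw [hstat] at hid
  have hge : a + b + c ≤ a*t^((2:ℝ)) + b*t^(2-N) + c*t^(2-2*N) := by
    have h7 : 0 ≤ (N-2) * ((a*t^((2:ℝ)) + b*t^(2-N) + c*t^(2-2*N)) - (a+b+c)) := by
      rw [hid]
      have u1 := mul_nonneg ha.le hB1
      have u2 := mul_nonneg hc.le hB2
      linarith
    have h6 : (0:ℝ) < N - 2 := by linarith
    have h8 := (mul_nonneg_iff_of_pos_left h6).mp h7
    linarith
  rw [hFx, hFt, ← habc]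
  exact hge

/-- Theorem 10.3, necessity direction (sphere case, a = b = d = 1): if there is a
positive nonconstant global solution of `g′² = C − g²·(1 + (H + g^(−n))²)`, then
`C > r₁(H)`. -/
theorem stmt_11 (n : ℕ) (hn : 2 < n) (H C : ℝ)
    (g : ℝ → ℝ) (hg : Differentiable ℝ g) (hgpos : ∀ t, 0 < g t)
    (hgnc : ∃ t₁ t₂ : ℝ, g t₁ ≠ g t₂)
    (hode : ∀ t : ℝ, (deriv g t) ^ 2 =
      C - (g t) ^ 2 * (1 + (H + g t ^ (-(n : ℤ))) ^ 2))
    (D : ℝ) (hD : D = H ^ 2 * (n : ℝ) ^ 2 + 4 * (n : ℝ) - 4)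
    (r₁ : ℝ)
    (hr₁ : r₁ = (n : ℝ) * (H * Real.sqrt D + H ^ 2 * (n : ℝ) + 2 * (n : ℝ) - 2) /
      ((2 : ℝ) ^ (((n : ℝ) - 2) / (n : ℝ))
        * ((n : ℝ) - 1) ^ (2 * ((n : ℝ) - 1) / (n : ℝ))
        * (Real.sqrt D - H * ((n : ℝ) - 2)) ^ (2 / (n : ℝ)))) :
    C > r₁ := by
  obtain ⟨t₁, t₂, hne⟩ := hgnc
  have hmvt : ∀ u v : ℝ, u < v → g u ≠ g v → ∃ w : ℝ, deriv g w ≠ 0 := by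
    intro u v huv hguv
    obtain ⟨w, _, hw⟩ := exists_hasDerivAt_eq_slope g (deriv g) huv
      hg.continuous.continuousOn (fun z _ => (hg z).hasDerivAt)
    refine ⟨w, ?_⟩
    rw [hw]
    exact div_ne_zero (sub_ne_zero.mpr (Ne.symm hguv)) (sub_ne_zero.mpr huv.ne')
  have hex : ∃ w : ℝ, deriv g w ≠ 0 := by
    rcases lt_trichotomy t₁ t₂ with h | h | h
    · exact hmvt t₁ t₂ h hne
    · exact absurd (congrArg g h) hne
    · exact hmvt t₂ t₁ h hne.symm
  obtain ⟨w, hw⟩ := hex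
  have h1 := hode w
  have h2 : r₁ ≤ (g w) ^ 2 * (1 + (H + g w ^ (-(n : ℤ))) ^ 2) :=
    key n hn H D r₁ hD hr₁ (g w) (hgpos w)
  have h3 : 0 < (deriv g w) ^ 2 :=
    lt_of_le_of_ne (sq_nonneg _) (Ne.symm (pow_ne_zero 2 hw))
  linarith
end

section
/- Let n > 2 be an integer and H, C ∈ ℝ with C > r₁(H), where r₁(H) = n·(H·√D + H²·n + 2n − 2) / (2^((n−2)/n) · (n−1)^(2(n−1)/n) · (√D − H·(n−2))^(2/n)) and D = H²·n² + 4n − 4. Then there exists a nonconstant, periodic, twice continuously differentiable function g : ℝ → ℝ with g(t) > 0 and g′(t)² = C − g(t)²·(1 + (H + g(t)^(−n))²) for all t ∈ ℝ (i.e. there exists T > 0 with g(t+T) = g(t) for all t). -/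
/-!
Write `φ x = x ^ 2 * (1 + (H + x⁻ⁿ) ^ 2)`, so that the equation reads `g' ^ 2 = C - φ g`.
On `(0, ∞)` one has `φ' x = 2 x q(x⁻ⁿ)` with `q u = 1 + H² - (n - 2) H u - (n - 1) u²`, a quadratic
with exactly one positive root; so `φ` decreases and then increases, and its minimum is `r₁(H)`.
For `C > r₁(H)` the equation `φ = C` thus has two simple roots `α < β` with `φ < C` between them.
Since `x ^ (2n - 2) * (C - φ x)` is a polynomial, `C - φ x = (x - α) (β - x) G x` with `G` smooth
and positive on `[α, β]`.

With `g = m + r sin θ`, where `m ∓ r = α, β`, one has `(g - α) (β - g) = (r cos θ) ^ 2`, so it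
suffices that `θ' = √(G (m + r sin θ))`. The inverse of `y ↦ ∫₀ʸ 1 / √(G (m + r sin s)) ds` solves
this on all of `ℝ` and advances by `2π` over a fixed time `T`, which makes `g` periodic.
-/

open Real Set Filter Topology
open scoped Polynomial

theorem contDiff_succ_of_hasDerivAt_comp {W θ : ℝ → ℝ} (hθ : ∀ t, HasDerivAt θ (W (θ t)) t) :
    ∀ {k : ℕ}, ContDiff ℝ k W → ContDiff ℝ (k + 1) θ := by
  have hdiff : Differentiable ℝ θ := fun t => (hθ t).differentiableAt
  have hderiv : deriv θ = W ∘ θ := funext fun t => (hθ t).deriv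
  intro k hW
  induction k with
  | zero =>
    refine contDiff_one_iff_deriv.2 ⟨hdiff, ?_⟩
    rw [hderiv]
    exact (contDiff_zero.1 hW).comp hdiff.continuous
  | succ k ih =>
    refine contDiff_succ_iff_deriv.2 ⟨hdiff, by simp, ?_⟩
    rw [hderiv]
    exact_mod_cast hW.comp (ih (hW.of_le (by exact_mod_cast k.le_succ)))

theorem exists_hasDerivAt_comp_of_periodic {W : ℝ → ℝ} {L : ℝ} (hW : Continuous W)
    (hWpos : ∀ x, 0 < W x) (hper : Function.Periodic W L) (hL : 0 < L) :
    ∃ θ : ℝ → ℝ, (∀ t, HasDerivAt θ (W (θ t)) t) ∧ Function.Surjective θ ∧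
      ∃ T > 0, ∀ t, θ (t + T) = θ t + L := by
  set τ : ℝ → ℝ := fun y => ∫ x in (0 : ℝ)..y, (W x)⁻¹
  have hWinv : Continuous fun x => (W x)⁻¹ := hW.inv₀ fun x => (hWpos x).ne'
  have hperinv : Function.Periodic (fun x => (W x)⁻¹) L := hper.comp Inv.inv
  have hint : ∀ a b, IntervalIntegrable (fun x => (W x)⁻¹) MeasureTheory.volume a b := fun a b =>
    hWinv.intervalIntegrable a b
  have hτ : ∀ y, HasDerivAt τ (W y)⁻¹ y := fun y =>
    (hWinv.integral_hasStrictDerivAt 0 y).hasDerivAt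
  have hτmono : StrictMono τ := strictMono_of_hasDerivAt_pos hτ fun y => inv_pos.2 (hWpos y)
  have hτL : 0 < τ L := by simpa [τ] using hτmono hL
  have hτshift : ∀ y, τ (y + L) = τ y + τ L := fun y => by
    simpa [τ] using hperinv.intervalIntegral_add_eq_add 0 y hint
  have hτzsmul : ∀ k : ℤ, τ (k • L) = k • τ L := fun k => by
    simpa [τ] using hperinv.intervalIntegral_add_zsmul_eq k 0 hint
  have hτsurj : Function.Surjective τ := by
    refine (continuous_iff_continuousAt.2 fun y => (hτ y).continuousAt).surjective
      (hτmono.monotone.tendsto_atTop_atTop fun b => ?_)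
      (hτmono.monotone.tendsto_atBot_atBot fun b => ?_)
    · obtain ⟨k, hk⟩ := Archimedean.arch b hτL
      exact ⟨(k : ℤ) • L, by rwa [hτzsmul, natCast_zsmul]⟩
    · obtain ⟨k, hk⟩ := Archimedean.arch (-b) hτL
      exact ⟨(-k : ℤ) • L, by rw [hτzsmul, neg_zsmul, natCast_zsmul]; linarith⟩
  set e := hτmono.orderIsoOfSurjective τ hτsurj
  have hθ : ∀ t, HasDerivAt e.symm (W (e.symm t)) t := fun t => by
    simpa using HasDerivAt.of_local_left_inverse e.symm.continuous.continuousAt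
      (hτ (e.symm t)) (inv_ne_zero (hWpos _).ne') (Eventually.of_forall e.apply_symm_apply)
  refine ⟨e.symm, hθ, e.symm.surjective, τ L, hτL, fun t => e.injective ?_⟩
  change e (e.symm (t + τ L)) = τ (e.symm t + L)
  rw [hτshift, e.apply_symm_apply]
  exact congrArg (· + τ L) (e.apply_symm_apply t).symm

theorem exists_periodic_sq_deriv_eq {α β : ℝ} (hαβ : α < β) {G : ℝ → ℝ}
    (hG : ContDiffOn ℝ 1 G (Icc α β)) (hGpos : ∀ x ∈ Icc α β, 0 < G x) :
    ∃ g : ℝ → ℝ, ContDiff ℝ 2 g ∧ (∀ t, g t ∈ Icc α β) ∧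
      (∀ t, deriv g t ^ 2 = (g t - α) * (β - g t) * G (g t)) ∧ α ∈ range g ∧ β ∈ range g ∧
      ∃ T > 0, Function.Periodic g T := by
  set m := (α + β) / 2
  set r := (β - α) / 2
  set p : ℝ → ℝ := fun s => m + r * sin s
  have hp : ContDiff ℝ 2 p := contDiff_const.add (contDiff_const.mul contDiff_sin)
  have hpmem : ∀ s, p s ∈ Icc α β := fun s => by
    constructor <;> simp only [p, m, r] <;> nlinarith [neg_one_le_sin s, sin_le_one s]
  have hpα : p (-(π / 2)) = α := by simp only [p, m, r, sin_neg, sin_pi_div_two]; ring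
  have hpβ : p (π / 2) = β := by simp only [p, m, r, sin_pi_div_two]; ring
  have hpsq : ∀ s, (p s - α) * (β - p s) = (r * cos s) ^ 2 := fun s => by
    linear_combination (-r ^ 2) * sin_sq_add_cos_sq s
  set W : ℝ → ℝ := fun s => √(G (p s))
  have hW : ContDiff ℝ 1 W :=
    (hG.sqrt fun x hx => (hGpos x hx).ne').comp_contDiff (hp.of_le (by norm_num)) hpmem
  have hWpos : ∀ s, 0 < W s := fun s => sqrt_pos.2 (hGpos _ (hpmem s))
  have hWper : Function.Periodic W (2 * π) := fun s => by simp only [W, p, sin_add_two_pi]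
  obtain ⟨θ, hθ, hθsurj, T, hT, hθT⟩ :=
    exists_hasDerivAt_comp_of_periodic hW.continuous hWpos hWper two_pi_pos
  have hg : ∀ t, HasDerivAt (p ∘ θ) (r * cos (θ t) * W (θ t)) t := fun t =>
    (((hasDerivAt_sin (θ t)).const_mul r).const_add m).comp t (hθ t)
  refine ⟨p ∘ θ, hp.comp (contDiff_succ_of_hasDerivAt_comp hθ hW), fun t => hpmem _,
    fun t => ?_, ?_, ?_, T, hT, fun t => by simp [hθT, p]⟩
  · rw [(hg t).deriv, Function.comp_apply, hpsq, mul_pow, sq_sqrt (hGpos _ (hpmem _)).le]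
  · obtain ⟨t, ht⟩ := hθsurj (-(π / 2))
    exact ⟨t, by simp [ht, hpα]⟩
  · obtain ⟨t, ht⟩ := hθsurj (π / 2)
    exact ⟨t, by simp [ht, hpβ]⟩

theorem zpow_neg_natCast_lt_zpow_neg_natCast {n : ℕ} {x y : ℝ} (hn : n ≠ 0) (hx : 0 < x)
    (hxy : x < y) : y ^ (-(n : ℤ)) < x ^ (-(n : ℤ)) := by
  simp only [zpow_neg, zpow_natCast]
  exact (inv_lt_inv₀ (pow_pos (hx.trans hxy) n) (pow_pos hx n)).2 (pow_lt_pow_left₀ hxy hx.le hn)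

theorem exists_eq_of_strictAntiOn_of_strictMonoOn {f : ℝ → ℝ} {a m b c : ℝ} (ham : a ≤ m)
    (hmb : m ≤ b) (hf : ContinuousOn f (Icc a b)) (hanti : StrictAntiOn f (Icc a m))
    (hmono : StrictMonoOn f (Icc m b)) (ha : c < f a) (hm : f m < c) (hb : c < f b) :
    ∃ α β, α ∈ Ioo a m ∧ β ∈ Ioo m b ∧ f α = c ∧ f β = c ∧ ∀ x ∈ Ioo α β, f x < c := by
  obtain ⟨α, hα, hfα⟩ :=
    intermediate_value_Icc' ham (hf.mono (Icc_subset_Icc_right hmb)) ⟨hm.le, ha.le⟩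
  obtain ⟨β, hβ, hfβ⟩ :=
    intermediate_value_Icc hmb (hf.mono (Icc_subset_Icc_left ham)) ⟨hm.le, hb.le⟩
  have hαa : α ≠ a := by rintro rfl; linarith
  have hαm : α ≠ m := by rintro rfl; linarith
  have hβm : β ≠ m := by rintro rfl; linarith
  have hβb : β ≠ b := by rintro rfl; linarith
  refine ⟨α, β, ⟨hα.1.lt_of_ne' hαa, hα.2.lt_of_ne hαm⟩, ⟨hβ.1.lt_of_ne' hβm, hβ.2.lt_of_ne hβb⟩,
    hfα, hfβ, fun x hx => ?_⟩
  rcases le_total x m with hxm | hmx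
  · exact hfα ▸ hanti hα ⟨hα.1.trans hx.1.le, hxm⟩ hx.1
  · exact hfβ ▸ hmono ⟨hmx, hx.2.le.trans hβ.2⟩ hβ hx.2

theorem Polynomial.exists_eval_eq_mul_pos_on_Icc {P : ℝ[X]} {α β : ℝ} (hαβ : α < β)
    (hα : P.IsRoot α) (hβ : P.IsRoot β) (hpos : ∀ x ∈ Ioo α β, 0 < P.eval x)
    (hα' : 0 < P.derivative.eval α) (hβ' : P.derivative.eval β < 0) :
    ∃ Q : ℝ[X], (∀ x, P.eval x = (x - α) * (β - x) * Q.eval x) ∧ ∀ x ∈ Icc α β, 0 < Q.eval x := by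
  have hdvd : (X - C α) * (C β - X) ∣ P := by
    rw [← neg_sub X (C β), mul_neg, neg_dvd]
    exact (isCoprime_X_sub_C_of_isUnit_sub (sub_ne_zero.2 hαβ.ne).isUnit).mul_dvd
      (dvd_iff_isRoot.2 hα) (dvd_iff_isRoot.2 hβ)
  obtain ⟨Q, rfl⟩ := hdvd
  have heval : ∀ x, ((X - C α) * (C β - X) * Q).eval x = (x - α) * (β - x) * Q.eval x := by
    simp
  have hderiv : ∀ x, ((X - C α) * (C β - X) * Q).derivative.eval x =
      (β - x) * Q.eval x - (x - α) * Q.eval x + (x - α) * (β - x) * Q.derivative.eval x := by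
    simp only [derivative_mul, derivative_sub, derivative_X, derivative_C, eval_add, eval_mul,
      eval_sub, eval_X, eval_C, eval_one, eval_zero]
    intro x
    ring
  refine ⟨Q, heval, fun x hx => ?_⟩
  rcases hx.1.eq_or_lt with rfl | hαx
  · rw [hderiv] at hα'
    nlinarith
  rcases hx.2.eq_or_lt with rfl | hxβ
  · rw [hderiv] at hβ'
    nlinarith
  have := hpos x ⟨hαx, hxβ⟩
  rw [heval] at this
  exact pos_of_mul_pos_right this (mul_pos (sub_pos.2 hαx) (sub_pos.2 hxβ)).le

noncomputable section

namespace CMCSphere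

def potential (n : ℕ) (H x : ℝ) : ℝ := x ^ 2 * (1 + (H + x ^ (-(n : ℤ))) ^ 2)

def slopeQuadratic (n : ℕ) (H u : ℝ) : ℝ := 1 + H ^ 2 - (n - 2) * H * u - (n - 1) * u ^ 2

def discr (n : ℕ) (H : ℝ) : ℝ := H ^ 2 * n ^ 2 + 4 * n - 4

def slopeRoot (n : ℕ) (H : ℝ) : ℝ := (√(discr n H) - H * (n - 2)) / (2 * (n - 1))

def criticalPoint (n : ℕ) (H : ℝ) : ℝ := (slopeRoot n H)⁻¹ ^ (n⁻¹ : ℝ)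

variable {n : ℕ} {H x : ℝ}

theorem hasDerivAt_potential (hx : x ≠ 0) :
    HasDerivAt (potential n H) (2 * x * slopeQuadratic n H (x ^ (-(n : ℤ)))) x := by
  have hu := hasDerivAt_zpow (-(n : ℤ)) x (Or.inl hx)
  refine ((hasDerivAt_pow 2 x).mul (((hu.const_add H).pow 2).const_add 1)).congr_deriv ?_
  simp only [Pi.pow_apply, zpow_sub_one₀ hx, slopeQuadratic]
  field_simp
  push_cast
  ring

theorem sq_sqrt_discr (hn : 2 ≤ n) : √(discr n H) ^ 2 = discr n H := by
  have hn' : (2 : ℝ) ≤ n := by exact_mod_cast hn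
  exact sq_sqrt (by unfold discr; nlinarith [sq_nonneg H])

theorem mul_abs_lt_sqrt_discr (hn : 2 ≤ n) : (n - 2) * |H| < √(discr n H) := by
  have hn' : (2 : ℝ) ≤ n := by exact_mod_cast hn
  refine (lt_sqrt (by positivity)).2 ?_
  unfold discr
  nlinarith [sq_abs H, sq_nonneg H]

theorem slopeRoot_pos (hn : 2 ≤ n) : 0 < slopeRoot n H := by
  have hn' : (2 : ℝ) ≤ n := by exact_mod_cast hn
  have := mul_abs_lt_sqrt_discr (H := H) hn
  have := le_abs_self H
  exact div_pos (by nlinarith) (by linarith)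

theorem slopeQuadratic_eq_mul (hn : 2 ≤ n) (u : ℝ) :
    slopeQuadratic n H u = (n - 1) * (slopeRoot n H - u) *
      (u + (√(discr n H) + H * (n - 2)) / (2 * (n - 1))) := by
  have hn' : (2 : ℝ) ≤ n := by exact_mod_cast hn
  have hn1 : (n : ℝ) - 1 ≠ 0 := by linarith
  have hs := sq_sqrt_discr (H := H) hn
  unfold slopeQuadratic slopeRoot
  field_simp
  unfold discr at hs ⊢
  linear_combination (-1 : ℝ) * hs

theorem slopeQuadratic_pos (hn : 2 ≤ n) {u : ℝ} (hu : 0 ≤ u) (h : u < slopeRoot n H) :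
    0 < slopeQuadratic n H u := by
  have hn' : (2 : ℝ) ≤ n := by exact_mod_cast hn
  have := mul_abs_lt_sqrt_discr (H := H) hn
  have := neg_abs_le H
  rw [slopeQuadratic_eq_mul hn]
  refine mul_pos (mul_pos (by linarith) (by linarith)) (add_pos_of_nonneg_of_pos hu ?_)
  exact div_pos (by nlinarith) (by linarith)

theorem slopeQuadratic_neg (hn : 2 ≤ n) {u : ℝ} (h : slopeRoot n H < u) :
    slopeQuadratic n H u < 0 := by
  have hn' : (2 : ℝ) ≤ n := by exact_mod_cast hn
  have := mul_abs_lt_sqrt_discr (H := H) hn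
  have := neg_abs_le H
  rw [slopeQuadratic_eq_mul hn]
  refine mul_neg_of_neg_of_pos (mul_neg_of_pos_of_neg (by linarith) (by linarith)) ?_
  refine add_pos ((slopeRoot_pos hn).trans h) (div_pos (by nlinarith) (by linarith))

theorem criticalPoint_pos (hn : 2 ≤ n) : 0 < criticalPoint n H :=
  rpow_pos_of_pos (inv_pos.2 (slopeRoot_pos hn)) _

theorem criticalPoint_zpow (hn : 2 ≤ n) : criticalPoint n H ^ (-(n : ℤ)) = slopeRoot n H := by
  rw [zpow_neg, zpow_natCast, criticalPoint,
    rpow_inv_natCast_pow (inv_pos.2 (slopeRoot_pos hn)).le (by omega), inv_inv]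

theorem slopeQuadratic_zpow_neg (hn : 2 ≤ n) (hx : 0 < x) (h : x < criticalPoint n H) :
    slopeQuadratic n H (x ^ (-(n : ℤ))) < 0 := by
  refine slopeQuadratic_neg hn ?_
  rw [← criticalPoint_zpow hn]
  exact zpow_neg_natCast_lt_zpow_neg_natCast (by omega) hx h

theorem slopeQuadratic_zpow_pos (hn : 2 ≤ n) (h : criticalPoint n H < x) :
    0 < slopeQuadratic n H (x ^ (-(n : ℤ))) := by
  refine slopeQuadratic_pos hn (zpow_nonneg ((criticalPoint_pos hn).trans h).le _) ?_
  rw [← criticalPoint_zpow hn]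
  exact zpow_neg_natCast_lt_zpow_neg_natCast (by omega) (criticalPoint_pos hn) h

theorem strictAntiOn_potential (hn : 2 ≤ n) :
    StrictAntiOn (potential n H) (Ioc 0 (criticalPoint n H)) := by
  refine strictAntiOn_of_hasDerivWithinAt_neg (convex_Ioc _ _)
    (fun x hx => (hasDerivAt_potential hx.1.ne').continuousAt.continuousWithinAt)
    (fun x hx => (hasDerivAt_potential (interior_subset hx).1.ne').hasDerivWithinAt)
    fun x hx => ?_
  rw [interior_Ioc] at hx
  exact mul_neg_of_pos_of_neg (by linarith [hx.1]) (slopeQuadratic_zpow_neg hn hx.1 hx.2)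

theorem strictMonoOn_potential (hn : 2 ≤ n) :
    StrictMonoOn (potential n H) (Ici (criticalPoint n H)) := by
  have hpos : ∀ x ∈ Ici (criticalPoint n H), 0 < x := fun x hx =>
    (criticalPoint_pos hn).trans_le hx
  refine strictMonoOn_of_hasDerivWithinAt_pos (convex_Ici _)
    (fun x hx => (hasDerivAt_potential (hpos x hx).ne').continuousAt.continuousWithinAt)
    (fun x hx => (hasDerivAt_potential (hpos x (interior_subset hx)).ne').hasDerivWithinAt)
    fun x hx => ?_
  rw [interior_Ici] at hx
  exact mul_pos (by linarith [(criticalPoint_pos hn).trans hx]) (slopeQuadratic_zpow_pos hn hx)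

theorem potential_criticalPoint (hn : 2 ≤ n) :
    potential n H (criticalPoint n H) =
      n * (H * √(discr n H) + H ^ 2 * n + 2 * n - 2) /
        (2 ^ ((n - 2) / n : ℝ) * (n - 1 : ℝ) ^ (2 * (n - 1) / n : ℝ) *
          (√(discr n H) - H * (n - 2)) ^ (2 / n : ℝ)) := by
  have hn' : (2 : ℝ) ≤ n := by exact_mod_cast hn
  have hs := sq_sqrt_discr (H := H) hn
  have hden : 0 < √(discr n H) - H * (n - 2) := by
    have := mul_abs_lt_sqrt_discr (H := H) hn
    nlinarith [le_abs_self H]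
  have hsq : criticalPoint n H ^ 2 =
      (2 : ℝ) ^ (2 / n : ℝ) * (n - 1 : ℝ) ^ (2 / n : ℝ) /
        (√(discr n H) - H * (n - 2)) ^ (2 / n : ℝ) := by
    rw [criticalPoint, ← rpow_natCast, ← rpow_mul (inv_pos.2 (slopeRoot_pos hn)).le, slopeRoot,
      inv_div, div_rpow (by linarith) hden.le, mul_rpow (by norm_num) (by linarith)]
    norm_num [div_eq_inv_mul]
  have h2 : (2 : ℝ) ^ ((n - 2) / n : ℝ) * 2 ^ (2 / n : ℝ) = 2 := by
    rw [← rpow_add two_pos, ← add_div, sub_add_cancel, div_self (by positivity), rpow_one]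
  have h3 : (n - 1 : ℝ) ^ (2 * (n - 1) / n : ℝ) * (n - 1 : ℝ) ^ (2 / n : ℝ) = (n - 1) ^ 2 := by
    rw [← rpow_add (by linarith), ← add_div, show 2 * ((n : ℝ) - 1) + 2 = 2 * n by ring,
      mul_div_cancel_right₀ _ (by positivity), ← rpow_natCast]
    norm_num
  have hn1 : (n : ℝ) - 1 ≠ 0 := by linarith
  have hdenom : 0 < 2 ^ ((n - 2) / n : ℝ) * (n - 1 : ℝ) ^ (2 * (n - 1) / n : ℝ) *
      (√(discr n H) - H * (n - 2)) ^ (2 / n : ℝ) :=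
    mul_pos (mul_pos (rpow_pos_of_pos two_pos _) (rpow_pos_of_pos (by linarith) _))
      (rpow_pos_of_pos hden _)
  rw [potential, criticalPoint_zpow hn, hsq, eq_div_iff hdenom.ne']
  calc _ = (2 ^ ((n - 2) / n : ℝ) * 2 ^ (2 / n : ℝ)) *
        ((n - 1 : ℝ) ^ (2 * (n - 1) / n : ℝ) * (n - 1 : ℝ) ^ (2 / n : ℝ)) *
        (1 + (H + slopeRoot n H) ^ 2) := by
        field_simp
    _ = _ := by
        rw [h2, h3, slopeRoot]
        field_simp
        unfold discr at hs ⊢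
        linear_combination hs

theorem tendsto_potential_atTop : Tendsto (potential n H) atTop atTop :=
  tendsto_atTop_mono (fun x => le_mul_of_one_le_right (sq_nonneg x) (by nlinarith))
    (tendsto_pow_atTop two_ne_zero)

theorem tendsto_potential_nhdsGT_zero (hn : 2 ≤ n) :
    Tendsto (potential n H) (𝓝[>] 0) atTop := by
  set f : ℝ → ℝ := fun x => x * (H + x ^ (-(n : ℤ)))
  have hf : Tendsto f (𝓝[>] 0) atTop := by
    refine tendsto_atTop_mono' _ ?_ (tendsto_atTop_add_const_right _ (-|H|) tendsto_inv_nhdsGT_zero)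
    filter_upwards [Ioc_mem_nhdsGT one_pos] with x ⟨hx0, hx1⟩
    have hxn : x ^ n ≤ x ^ 2 := pow_le_pow_of_le_one hx0.le hx1 hn
    have hinv : x⁻¹ ≤ x * x ^ (-(n : ℤ)) := by
      rw [zpow_neg, zpow_natCast, ← div_eq_mul_inv, le_div_iff₀ (pow_pos hx0 n)]
      calc x⁻¹ * x ^ n ≤ x⁻¹ * x ^ 2 := by gcongr
        _ = x := by field_simp
    have : -|H| ≤ x * H := by nlinarith [neg_abs_le H, le_abs_self H, abs_nonneg H]
    simp only [f]
    linarith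
  refine tendsto_atTop_mono (fun x => ?_) (hf.atTop_mul_atTop₀ hf)
  simp only [f, potential]
  nlinarith [sq_nonneg x]

theorem exists_potential_eq (hn : 2 ≤ n) {C : ℝ} (hC : potential n H (criticalPoint n H) < C) :
    ∃ α β, 0 < α ∧ α < criticalPoint n H ∧ criticalPoint n H < β ∧
      potential n H α = C ∧ potential n H β = C ∧ ∀ x ∈ Ioo α β, potential n H x < C := by
  set m := criticalPoint n H
  have hm : 0 < m := criticalPoint_pos hn
  obtain ⟨a, hCa, ha0, ham⟩ := (((tendsto_potential_nhdsGT_zero hn).eventually_gt_atTop C).and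
    (Ioo_mem_nhdsGT hm)).exists
  obtain ⟨b, hCb, hmb⟩ :=
    ((tendsto_potential_atTop.eventually_gt_atTop C).and (eventually_gt_atTop m)).exists
  have hcont : ContinuousOn (potential n H) (Icc a b) := fun x hx =>
    (hasDerivAt_potential (ha0.trans_le hx.1).ne').continuousAt.continuousWithinAt
  obtain ⟨α, β, hα, hβ, hαC, hβC, hlt⟩ := exists_eq_of_strictAntiOn_of_strictMonoOn ham.le hmb.le
    hcont ((strictAntiOn_potential hn).mono fun x hx => ⟨ha0.trans_le hx.1, hx.2⟩)
    ((strictMonoOn_potential hn).mono fun x hx => hx.1) hCa hC hCb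
  exact ⟨α, β, ha0.trans hα.1, hα.2, hβ.1, hαC, hβC, hlt⟩

def potentialPoly (n : ℕ) (H C : ℝ) : ℝ[X] :=
  Polynomial.C C * Polynomial.X ^ (2 * n - 2) - Polynomial.C (1 + H ^ 2) * Polynomial.X ^ (2 * n)
    - Polynomial.C (2 * H) * Polynomial.X ^ n - 1

theorem eval_potentialPoly (hn : 1 ≤ n) {C : ℝ} (hx : x ≠ 0) :
    (potentialPoly n H C).eval x = x ^ (2 * n - 2) * (C - potential n H x) := by
  obtain ⟨k, rfl⟩ : ∃ k, n = k + 1 := ⟨n - 1, by omega⟩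
  simp only [potentialPoly, potential, Polynomial.eval_sub, Polynomial.eval_mul,
    Polynomial.eval_pow, Polynomial.eval_C, Polynomial.eval_X, Polynomial.eval_one, zpow_neg,
    zpow_natCast, show 2 * (k + 1) - 2 = 2 * k by omega]
  field_simp
  ring

theorem hasDerivAt_eval_potentialPoly (hn : 1 ≤ n) {C : ℝ} (hx : 0 < x)
    (hxC : potential n H x = C) :
    HasDerivAt (fun y => (potentialPoly n H C).eval y)
      (-(x ^ (2 * n - 2) * (2 * x * slopeQuadratic n H (x ^ (-(n : ℤ)))))) x := by
  have h := (hasDerivAt_pow (2 * n - 2) x).mul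
    ((hasDerivAt_potential (n := n) (H := H) hx.ne').const_sub C)
  refine (h.congr_of_eventuallyEq ?_).congr_deriv ?_
  · filter_upwards [eventually_ne_nhds hx.ne'] with y hy using eval_potentialPoly hn hy
  · rw [hxC]
    ring

theorem exists_sub_potential_eq_mul (hn : 2 ≤ n) {C : ℝ}
    (hC : potential n H (criticalPoint n H) < C) :
    ∃ α β : ℝ, ∃ G : ℝ → ℝ, 0 < α ∧ α < β ∧ ContDiffOn ℝ 1 G (Icc α β) ∧
      (∀ x ∈ Icc α β, 0 < G x) ∧ ∀ x ∈ Icc α β, C - potential n H x = (x - α) * (β - x) * G x := by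
  obtain ⟨α, β, hα0, hαm, hmβ, hαC, hβC, hlt⟩ := exists_potential_eq hn hC
  have hβ0 : 0 < β := (criticalPoint_pos hn).trans hmβ
  have hαβ : α < β := hαm.trans hmβ
  set P := potentialPoly n H C
  have hroot : ∀ x, 0 < x → potential n H x = C → P.IsRoot x := fun x hx hxC => by
    rw [Polynomial.IsRoot, eval_potentialPoly (by omega) hx.ne', hxC, sub_self, mul_zero]
  have hderiv : ∀ x, 0 < x → potential n H x = C → P.derivative.eval x =
      -(x ^ (2 * n - 2) * (2 * x * slopeQuadratic n H (x ^ (-(n : ℤ))))) := fun x hx hxC =>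
    (P.hasDerivAt x).unique (hasDerivAt_eval_potentialPoly (by omega) hx hxC)
  obtain ⟨Q, hPQ, hQ⟩ := P.exists_eval_eq_mul_pos_on_Icc hαβ (hroot α hα0 hαC) (hroot β hβ0 hβC)
    (fun x hx => by
      rw [eval_potentialPoly (by omega) (hα0.trans hx.1).ne']
      exact mul_pos (pow_pos (hα0.trans hx.1) _) (sub_pos.2 (hlt x hx)))
    (by
      rw [hderiv α hα0 hαC, neg_pos]
      exact mul_neg_of_pos_of_neg (by positivity) (mul_neg_of_pos_of_neg (by positivity)
        (slopeQuadratic_zpow_neg hn hα0 hαm)))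
    (by
      rw [hderiv β hβ0 hβC, neg_neg_iff_pos]
      exact mul_pos (by positivity) (mul_pos (by positivity) (slopeQuadratic_zpow_pos hn hmβ)))
  have hx0 : ∀ x ∈ Icc α β, x ^ (2 * n - 2) ≠ 0 := fun x hx =>
    pow_ne_zero _ (hα0.trans_le hx.1).ne'
  have hQsmooth : ContDiff ℝ 1 Q.eval := by simpa using Q.contDiff_aeval (𝕜 := ℝ) 1
  refine ⟨α, β, fun x => Q.eval x / x ^ (2 * n - 2), hα0, hαβ,
    hQsmooth.contDiffOn.div (contDiff_id.pow _).contDiffOn hx0,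
    fun x hx => div_pos (hQ x hx) (pow_pos (hα0.trans_le hx.1) _), fun x hx => ?_⟩
  rw [mul_div_assoc', eq_div_iff (hx0 x hx), ← hPQ, eval_potentialPoly (by omega)
    (hα0.trans_le hx.1).ne', mul_comm]

end CMCSphere

end

/-- Theorem 10.3, existence direction (sphere case, a = b = d = 1): if
`C > r₁(H)`, there exists a nonconstant periodic positive `C²` global solution of
`g′² = C − g²·(1 + (H + g^(−n))²)`. -/
theorem stmt_12 (n : ℕ) (hn : 2 < n) (H C : ℝ)
    (D : ℝ) (hD : D = H ^ 2 * (n : ℝ) ^ 2 + 4 * (n : ℝ) - 4)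
    (r₁ : ℝ)
    (hr₁ : r₁ = (n : ℝ) * (H * Real.sqrt D + H ^ 2 * (n : ℝ) + 2 * (n : ℝ) - 2) /
      ((2 : ℝ) ^ (((n : ℝ) - 2) / (n : ℝ))
        * ((n : ℝ) - 1) ^ (2 * ((n : ℝ) - 1) / (n : ℝ))
        * (Real.sqrt D - H * ((n : ℝ) - 2)) ^ (2 / (n : ℝ))))
    (hC : C > r₁) :
    ∃ g : ℝ → ℝ, ContDiff ℝ 2 g ∧ (∀ t, 0 < g t) ∧
      (∀ t : ℝ, (deriv g t) ^ 2 =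
        C - (g t) ^ 2 * (1 + (H + g t ^ (-(n : ℤ))) ^ 2)) ∧
      (∃ t₁ t₂ : ℝ, g t₁ ≠ g t₂) ∧
      (∃ T : ℝ, 0 < T ∧ ∀ t : ℝ, g (t + T) = g t) := by
  subst hD hr₁
  obtain ⟨α, β, G, hα, hαβ, hG, hGpos, hfactor⟩ := CMCSphere.exists_sub_potential_eq_mul hn.le
    ((CMCSphere.potential_criticalPoint (H := H) hn.le).trans_lt hC)
  obtain ⟨g, hg, hmem, hode, ⟨t₁, ht₁⟩, ⟨t₂, ht₂⟩, T, hT, hper⟩ :=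
    exists_periodic_sq_deriv_eq hαβ hG hGpos
  refine ⟨g, hg, fun t => hα.trans_le (hmem t).1, fun t => ?_, ⟨t₁, t₂, ht₁ ▸ ht₂ ▸ hαβ.ne⟩,
    T, hT, hper⟩
  rw [hode, ← hfactor _ (hmem t), CMCSphere.potential]
end

section
/- Let n > 2 be an integer and H, C ∈ ℝ. Let g : ℝ → ℝ be a differentiable, nonconstant function with g(t) > 0 and g′(t)² = C − g(t)²·(1 + (H + g(t)^(−n))²) for all t ∈ ℝ. Then inf over t ∈ ℝ of √(n(n−1))·g(t)^(−n) < b₁(H) < sup over t ∈ ℝ of √(n(n−1))·g(t)^(−n), where b₁(H) = √n·(√(H²·n² + 4n − 4) − H·(n−2)) / (2·√(n−1)). -/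
open Set

lemma u_bound (n : ℕ) (hn : 2 < n) (H C x : ℝ) (hx0 : 0 < x)
    (hFC : x ^ 2 * (1 + (H + x ^ (-(n:ℤ))) ^ 2) ≤ C) :
    x ^ (-(n:ℤ)) ≤ max (max 1 (2 * |H|)) (4 * C) := by
  set u := x ^ (-(n:ℤ)) with hudef
  have hu0 : 0 < u := zpow_pos hx0 _
  have hxu : x ^ n * u = 1 := by
    rw [hudef, ← zpow_natCast x n, ← zpow_add₀ hx0.ne']
    simp
  by_contra hcon
  push_neg at hcon
  have h1 : (1:ℝ) < u := lt_of_le_of_lt ((le_max_left 1 (2*|H|)).trans (le_max_left _ (4*C))) hcon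
  have h2 : 2 * |H| < u := lt_of_le_of_lt ((le_max_right 1 (2*|H|)).trans (le_max_left _ (4*C))) hcon
  have h3 : 4 * C < u := lt_of_le_of_lt (le_max_right _ (4*C)) hcon
  have hxn1 : x ^ n < 1 := by
    have hinv : x ^ n = u⁻¹ := eq_inv_of_mul_eq_one_left hxu
    rw [hinv]
    exact inv_lt_one_of_one_lt₀ h1
  have hx1 : x < 1 := by
    by_contra hx1
    push_neg at hx1
    exact absurd hxn1 (not_lt.2 (one_le_pow₀ hx1))
  have hx2 : x ^ n ≤ x ^ 2 := pow_le_pow_of_le_one hx0.le hx1.le (by omega)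
  have hHu : u / 2 < H + u := by
    have := neg_abs_le H
    linarith
  have h4a : x ^ n * u ^ 2 = u := by linear_combination u * hxu
  have h4 : u ≤ x ^ 2 * u ^ 2 := by
    nlinarith [mul_nonneg (sub_nonneg.2 hx2) (sq_nonneg u), h4a]
  have h5 : x ^ 2 * (u/2) ^ 2 ≤ x ^ 2 * (H + u) ^ 2 := by
    apply mul_le_mul_of_nonneg_left _ (sq_nonneg x)
    nlinarith [hu0]
  nlinarith [hFC, h5, h4, h3, sq_nonneg x]


lemma escape_up (n : ℕ) (H C xstar : ℝ)
    (g : ℝ → ℝ) (hg : Differentiable ℝ g) (hgpos : ∀ t, 0 < g t)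
    (hode : ∀ t : ℝ, (deriv g t) ^ 2 =
      C - (g t) ^ 2 * (1 + (H + g t ^ (-(n : ℤ))) ^ 2))
    (hF : AntitoneOn (fun x : ℝ => x ^ 2 * (1 + (H + x ^ (-(n:ℤ))) ^ 2)) (Set.Ioc 0 xstar))
    (t₀ : ℝ) (hm : 0 < deriv g t₀) (hle : ∀ t, g t ≤ xstar) : False := by
  set φ := deriv g with hφ
  set m := φ t₀ with hmdef
  set a := g t₀ with hadef
  have ha_pos : 0 < a := hgpos t₀
  have ha_le : a ≤ xstar := hle t₀
  have hsq_eq : (fun t => (φ t) ^ 2)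
      = fun t => C - (g t) ^ 2 * (1 + (H + ((g t) ^ n)⁻¹) ^ 2) := by
    funext t
    rw [hode t, zpow_neg, zpow_natCast]
  have hcont : Continuous fun t => (φ t) ^ 2 := by
    rw [hsq_eq]
    have hginv : Continuous fun t => ((g t) ^ n)⁻¹ :=
      (hg.continuous.pow n).inv₀ fun t => (pow_pos (hgpos t) n).ne'
    exact continuous_const.sub ((hg.continuous.pow 2).mul
      (continuous_const.add ((continuous_const.add hginv).pow 2)))
  have hdar : ∀ x y : ℝ, x < y → 0 < φ x → φ y < 0 → ∃ c ∈ Ioo x y, φ c = 0 :=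
    fun x y hxy hx hy => exists_hasDerivWithinAt_eq_of_lt_of_gt hxy.le
      (fun z _ => (hg z).hasDerivAt.hasDerivWithinAt) hx hy
  set T := t₀ + 2 * (xstar - a + 1) / m with hTdef
  have hT : t₀ < T := by
    have h1 : 0 < xstar - a + 1 := by linarith
    have h2 : 0 < 2 * (xstar - a + 1) / m := by positivity
    rw [hTdef]; linarith
  have key : ∀ s ∈ Icc t₀ T, (m / 2) ^ 2 < (φ s) ^ 2 := by
    by_contra hcon
    push_neg at hcon
    obtain ⟨s₁, hs₁, hs₁'⟩ := hcon
    set K := Icc t₀ T ∩ {t | (φ t) ^ 2 ≤ (m / 2) ^ 2} with hK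
    have hKcl : IsClosed K := isClosed_Icc.inter (isClosed_le (hcont) continuous_const)
    have hKne : K.Nonempty := ⟨s₁, hs₁, hs₁'⟩
    have hKbd : BddBelow K := ⟨t₀, fun x hx => hx.1.1⟩
    set s₀ := sInf K with hs₀def
    have hs₀K : s₀ ∈ K := hKcl.csInf_mem hKne hKbd
    have hs₀I : s₀ ∈ Icc t₀ T := hs₀K.1
    have ht₀s₀ : t₀ < s₀ := by
      rcases eq_or_lt_of_le hs₀I.1 with h | h
      · exfalso
        have h5 := hs₀K.2
        rw [← h] at h5
        simp only [mem_setOf_eq, ← hmdef] at h5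
        nlinarith
      · exact h
    have hbefore : ∀ τ, t₀ ≤ τ → τ < s₀ → (m / 2) ^ 2 < (φ τ) ^ 2 := by
      intro τ h1 h2
      by_contra hc
      push_neg at hc
      have : τ ∈ K := ⟨⟨h1, h2.le.trans hs₀I.2⟩, hc⟩
      exact absurd (csInf_le hKbd this) (not_le.2 h2)
    have hpos : ∀ τ, t₀ ≤ τ → τ < s₀ → m / 2 < φ τ := by
      intro τ h1 h2
      by_contra hc
      push_neg at hc
      have hneg : φ τ < -(m / 2) := by nlinarith [hbefore τ h1 h2]
      have ht₀τ : t₀ < τ := by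
        rcases eq_or_lt_of_le h1 with h | h
        · exfalso; rw [← h] at hneg; rw [← hmdef] at hneg; linarith
        · exact h
      obtain ⟨c, hc1, hc2⟩ := hdar t₀ τ ht₀τ hm (by linarith)
      have h9 := hbefore c hc1.1.le (hc1.2.trans h2)
      rw [hc2] at h9
      nlinarith
    have hmono : MonotoneOn g (Icc t₀ s₀) := by
      apply monotoneOn_of_deriv_nonneg (convex_Icc t₀ s₀) hg.continuous.continuousOn
        hg.differentiableOn
      intro x hx
      rw [interior_Icc] at hx
      have := hpos x hx.1.le hx.2
      linarith
    have hga : a ≤ g s₀ := hmono ⟨le_refl t₀, ht₀s₀.le⟩ ⟨ht₀s₀.le, le_refl s₀⟩ ht₀s₀.le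
    have hFle : (g s₀) ^ 2 * (1 + (H + g s₀ ^ (-(n:ℤ))) ^ 2)
        ≤ a ^ 2 * (1 + (H + a ^ (-(n:ℤ))) ^ 2) :=
      hF ⟨ha_pos, ha_le⟩ ⟨hgpos s₀, hle s₀⟩ hga
    have h1 : (φ s₀) ^ 2 = C - (g s₀) ^ 2 * (1 + (H + g s₀ ^ (-(n:ℤ))) ^ 2) := hode s₀
    have h2 : m ^ 2 = C - a ^ 2 * (1 + (H + a ^ (-(n:ℤ))) ^ 2) := hode t₀
    have h3 : m ^ 2 ≤ (φ s₀) ^ 2 := by rw [h1, h2]; linarith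
    have h4 := hs₀K.2
    simp only [mem_setOf_eq] at h4
    nlinarith
  have hallpos : ∀ s ∈ Icc t₀ T, m / 2 < φ s := by
    intro s hs
    by_contra hc
    push_neg at hc
    have hneg : φ s < -(m / 2) := by nlinarith [key s hs]
    have ht₀s : t₀ < s := by
      rcases eq_or_lt_of_le hs.1 with h | h
      · exfalso; rw [← h] at hneg; rw [← hmdef] at hneg; linarith
      · exact h
    obtain ⟨c, hc1, hc2⟩ := hdar t₀ s ht₀s hm (by linarith)
    have h9 := key c ⟨hc1.1.le, hc1.2.le.trans hs.2⟩
    rw [hc2] at h9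
    nlinarith
  obtain ⟨c, hc, hslope⟩ := exists_hasDerivAt_eq_slope g φ hT
    hg.continuous.continuousOn (fun x _ => (hg x).hasDerivAt)
  have h6 : m / 2 < (g T - g t₀) / (T - t₀) := by
    rw [← hslope]; exact hallpos c ⟨hc.1.le, hc.2.le⟩
  rw [lt_div_iff₀ (sub_pos.2 hT)] at h6
  have hm0 : m ≠ 0 := ne_of_gt hm
  have h8 : m / 2 * (T - t₀) = xstar - a + 1 := by
    rw [hTdef]; field_simp; ring
  rw [← hadef] at h6
  rw [h8] at h6
  linarith [hle T]

lemma escape_down (n : ℕ) (H C xstar : ℝ)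
    (g : ℝ → ℝ) (hg : Differentiable ℝ g) (hgpos : ∀ t, 0 < g t)
    (hode : ∀ t : ℝ, (deriv g t) ^ 2 =
      C - (g t) ^ 2 * (1 + (H + g t ^ (-(n : ℤ))) ^ 2))
    (hF : MonotoneOn (fun x : ℝ => x ^ 2 * (1 + (H + x ^ (-(n:ℤ))) ^ 2)) (Set.Ici xstar))
    (t₀ : ℝ) (hm : deriv g t₀ < 0) (hge : ∀ t, xstar ≤ g t) : False := by
  set φ := deriv g with hφ
  set m := -φ t₀ with hmdef
  have hmpos : 0 < m := by rw [hmdef]; linarith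
  have hφt₀ : φ t₀ = -m := by rw [hmdef]; ring
  set a := g t₀ with hadef
  have ha_pos : 0 < a := hgpos t₀
  have ha_ge : xstar ≤ a := hge t₀
  have hsq_eq : (fun t => (φ t) ^ 2)
      = fun t => C - (g t) ^ 2 * (1 + (H + ((g t) ^ n)⁻¹) ^ 2) := by
    funext t
    rw [hode t, zpow_neg, zpow_natCast]
  have hcont : Continuous fun t => (φ t) ^ 2 := by
    rw [hsq_eq]
    have hginv : Continuous fun t => ((g t) ^ n)⁻¹ :=
      (hg.continuous.pow n).inv₀ fun t => (pow_pos (hgpos t) n).ne'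
    exact continuous_const.sub ((hg.continuous.pow 2).mul
      (continuous_const.add ((continuous_const.add hginv).pow 2)))
  have hdar : ∀ x y : ℝ, x < y → φ x < 0 → 0 < φ y → ∃ c ∈ Ioo x y, φ c = 0 :=
    fun x y hxy hx hy => exists_hasDerivWithinAt_eq_of_gt_of_lt hxy.le
      (fun z _ => (hg z).hasDerivAt.hasDerivWithinAt) hx hy
  set T := t₀ + 2 * (a + 1) / m with hTdef
  have hT : t₀ < T := by
    have h1 : 0 < a + 1 := by linarith
    have h2 : 0 < 2 * (a + 1) / m := by positivity
    rw [hTdef]; linarith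
  have key : ∀ s ∈ Icc t₀ T, (m / 2) ^ 2 < (φ s) ^ 2 := by
    by_contra hcon
    push_neg at hcon
    obtain ⟨s₁, hs₁, hs₁'⟩ := hcon
    set K := Icc t₀ T ∩ {t | (φ t) ^ 2 ≤ (m / 2) ^ 2} with hK
    have hKcl : IsClosed K := isClosed_Icc.inter (isClosed_le (hcont) continuous_const)
    have hKne : K.Nonempty := ⟨s₁, hs₁, hs₁'⟩
    have hKbd : BddBelow K := ⟨t₀, fun x hx => hx.1.1⟩
    set s₀ := sInf K with hs₀def
    have hs₀K : s₀ ∈ K := hKcl.csInf_mem hKne hKbd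
    have hs₀I : s₀ ∈ Icc t₀ T := hs₀K.1
    have ht₀s₀ : t₀ < s₀ := by
      rcases eq_or_lt_of_le hs₀I.1 with h | h
      · exfalso
        have h5 := hs₀K.2
        rw [← h] at h5
        simp only [mem_setOf_eq, hφt₀] at h5
        nlinarith
      · exact h
    have hbefore : ∀ τ, t₀ ≤ τ → τ < s₀ → (m / 2) ^ 2 < (φ τ) ^ 2 := by
      intro τ h1 h2
      by_contra hc
      push_neg at hc
      have : τ ∈ K := ⟨⟨h1, h2.le.trans hs₀I.2⟩, hc⟩
      exact absurd (csInf_le hKbd this) (not_le.2 h2)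
    have hpos : ∀ τ, t₀ ≤ τ → τ < s₀ → φ τ < -(m / 2) := by
      intro τ h1 h2
      by_contra hc
      push_neg at hc
      have hneg : m / 2 < φ τ := by nlinarith [hbefore τ h1 h2]
      have ht₀τ : t₀ < τ := by
        rcases eq_or_lt_of_le h1 with h | h
        · exfalso; rw [← h] at hneg; rw [hφt₀] at hneg; linarith
        · exact h
      obtain ⟨c, hc1, hc2⟩ := hdar t₀ τ ht₀τ (by rw [hφt₀]; linarith) (by linarith)
      have h9 := hbefore c hc1.1.le (hc1.2.trans h2)
      rw [hc2] at h9
      nlinarith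
    have hmono : AntitoneOn g (Icc t₀ s₀) := by
      apply antitoneOn_of_deriv_nonpos (convex_Icc t₀ s₀) hg.continuous.continuousOn
        hg.differentiableOn
      intro x hx
      rw [interior_Icc] at hx
      have := hpos x hx.1.le hx.2
      linarith
    have hga : g s₀ ≤ a := hmono ⟨le_refl t₀, ht₀s₀.le⟩ ⟨ht₀s₀.le, le_refl s₀⟩ ht₀s₀.le
    have hFle : (g s₀) ^ 2 * (1 + (H + g s₀ ^ (-(n:ℤ))) ^ 2)
        ≤ a ^ 2 * (1 + (H + a ^ (-(n:ℤ))) ^ 2) :=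
      hF (hge s₀) ha_ge hga
    have h1 : (φ s₀) ^ 2 = C - (g s₀) ^ 2 * (1 + (H + g s₀ ^ (-(n:ℤ))) ^ 2) := hode s₀
    have h2 : (φ t₀) ^ 2 = C - a ^ 2 * (1 + (H + a ^ (-(n:ℤ))) ^ 2) := hode t₀
    rw [hφt₀] at h2
    have h3 : m ^ 2 ≤ (φ s₀) ^ 2 := by rw [h1]; nlinarith
    have h4 := hs₀K.2
    simp only [mem_setOf_eq] at h4
    nlinarith
  have hallneg : ∀ s ∈ Icc t₀ T, φ s < -(m / 2) := by
    intro s hs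
    by_contra hc
    push_neg at hc
    have hneg : m / 2 < φ s := by nlinarith [key s hs]
    have ht₀s : t₀ < s := by
      rcases eq_or_lt_of_le hs.1 with h | h
      · exfalso; rw [← h] at hneg; rw [hφt₀] at hneg; linarith
      · exact h
    obtain ⟨c, hc1, hc2⟩ := hdar t₀ s ht₀s (by rw [hφt₀]; linarith) (by linarith)
    have h9 := key c ⟨hc1.1.le, hc1.2.le.trans hs.2⟩
    rw [hc2] at h9
    nlinarith
  obtain ⟨c, hc, hslope⟩ := exists_hasDerivAt_eq_slope g φ hT
    hg.continuous.continuousOn (fun x _ => (hg x).hasDerivAt)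
  have h6 : (g T - g t₀) / (T - t₀) < -(m / 2) := by
    rw [← hslope]; exact hallneg c ⟨hc.1.le, hc.2.le⟩
  rw [div_lt_iff₀ (sub_pos.2 hT)] at h6
  have hm0 : m ≠ 0 := ne_of_gt hmpos
  have h8 : -(m / 2) * (T - t₀) = -(a + 1) := by
    rw [hTdef]; field_simp; ring
  rw [← hadef, h8] at h6
  linarith [hgpos T]

lemma zpow_neg_anti' {x y : ℝ} (hx : 0 < x) (hxy : x < y) {n : ℕ} (hn : 0 < n) :
    y ^ (-(n:ℤ)) < x ^ (-(n:ℤ)) := by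
  rw [zpow_neg, zpow_neg, zpow_natCast, zpow_natCast]
  exact inv_strictAnti₀ (pow_pos hx n) (pow_lt_pow_left₀ hxy hx.le hn.ne')

lemma hasDerivAt_F (n : ℕ) (H : ℝ) {x : ℝ} (hx : 0 < x) :
    HasDerivAt (fun y : ℝ => y ^ 2 * (1 + (H + y ^ (-(n:ℤ))) ^ 2))
      (2 * x * (1 + (H + x ^ (-(n:ℤ))) ^ 2 - (n:ℝ) * x ^ (-(n:ℤ)) * (H + x ^ (-(n:ℤ))))) x := by
  have hz : HasDerivAt (fun y : ℝ => y ^ (-(n:ℤ))) ((-(n:ℝ)) * x ^ (-(n:ℤ) - 1)) x := by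
    have := hasDerivAt_zpow (-(n:ℤ)) x (Or.inl hx.ne')
    refine this.congr_deriv ?_
    push_cast; ring
  have h2 : HasDerivAt (fun y : ℝ => (H + y ^ (-(n:ℤ))) ^ 2)
      ((2:ℕ) * (H + x ^ (-(n:ℤ))) ^ 1 * ((-(n:ℝ)) * x ^ (-(n:ℤ) - 1))) x :=
    (hz.const_add H).pow 2
  have h3 := h2.const_add 1
  have h4 : HasDerivAt (fun y : ℝ => y ^ 2) (2 * x) x := by
    simpa using hasDerivAt_pow 2 x
  have h5 := h4.mul h3
  refine h5.congr_deriv ?_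
  have he : x ^ (-(n:ℤ) - 1) = x ^ (-(n:ℤ)) * x⁻¹ := by
    rw [sub_eq_add_neg, zpow_add₀ hx.ne']; norm_num
  rw [he]
  field_simp
  ring


lemma F_antitoneOn (n : ℕ) (H ustar xstar : ℝ) (hnpos : 0 < n)
    (hxs_rel : xstar ^ (-(n:ℤ)) = ustar)
    (hq_nonneg : ∀ u : ℝ, ustar ≤ u →
      0 ≤ ((n:ℝ) - 1) * u ^ 2 + ((n:ℝ) - 2) * H * u - (1 + H ^ 2)) :
    AntitoneOn (fun x : ℝ => x ^ 2 * (1 + (H + x ^ (-(n:ℤ))) ^ 2)) (Set.Ioc 0 xstar) := by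
  apply antitoneOn_of_deriv_nonpos (convex_Ioc 0 xstar)
  · intro x hx
    exact (hasDerivAt_F n H hx.1).continuousAt.continuousWithinAt
  · rw [interior_Ioc]
    intro x hx
    exact (hasDerivAt_F n H hx.1).differentiableAt.differentiableWithinAt
  · rw [interior_Ioc]
    intro x hx
    rw [(hasDerivAt_F n H hx.1).deriv]
    have hu : ustar ≤ x ^ (-(n:ℤ)) := by
      rw [← hxs_rel]
      exact (zpow_neg_anti' hx.1 hx.2 hnpos).le
    have hq := hq_nonneg _ hu
    set u := x ^ (-(n:ℤ))
    nlinarith [mul_nonneg hx.1.le hq]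

lemma F_monotoneOn (n : ℕ) (H ustar xstar : ℝ) (hnpos : 0 < n)
    (hxs_pos : 0 < xstar) (hxs_rel : xstar ^ (-(n:ℤ)) = ustar)
    (hq_nonpos : ∀ u : ℝ, 0 < u → u ≤ ustar →
      ((n:ℝ) - 1) * u ^ 2 + ((n:ℝ) - 2) * H * u - (1 + H ^ 2) ≤ 0) :
    MonotoneOn (fun x : ℝ => x ^ 2 * (1 + (H + x ^ (-(n:ℤ))) ^ 2)) (Set.Ici xstar) := by
  apply monotoneOn_of_deriv_nonneg (convex_Ici xstar)
  · intro x hx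
    exact (hasDerivAt_F n H (lt_of_lt_of_le hxs_pos hx)).continuousAt.continuousWithinAt
  · rw [interior_Ici]
    intro x hx
    exact (hasDerivAt_F n H (hxs_pos.trans hx)).differentiableAt.differentiableWithinAt
  · rw [interior_Ici]
    intro x hx
    have hx0 : 0 < x := hxs_pos.trans hx
    rw [(hasDerivAt_F n H hx0).deriv]
    have hu : x ^ (-(n:ℤ)) ≤ ustar := by
      rw [← hxs_rel]
      exact (zpow_neg_anti' hxs_pos hx hnpos).le
    have hu0 : 0 < x ^ (-(n:ℤ)) := zpow_pos hx0 _
    have hq := hq_nonpos _ hu0 hu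
    set u := x ^ (-(n:ℤ))
    nlinarith [mul_nonneg hx0.le (neg_nonneg.2 hq)]

/-- Theorem 11.6 (sphere case, a = b = d = 1, strict form for nonconstant
solutions): `inf |Φ| < b₁(H) < sup |Φ|` where `|Φ| = √(n(n−1))·g^(−n)` and
`b₁(H) = √n·(√(H²n² + 4n − 4) − H(n−2))/(2√(n−1))`. -/
theorem stmt_13 (n : ℕ) (hn : 2 < n) (H C : ℝ)
    (g : ℝ → ℝ) (hg : Differentiable ℝ g) (hgpos : ∀ t, 0 < g t)
    (hgnc : ∃ t₁ t₂ : ℝ, g t₁ ≠ g t₂)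
    (hode : ∀ t : ℝ, (deriv g t) ^ 2 =
      C - (g t) ^ 2 * (1 + (H + g t ^ (-(n : ℤ))) ^ 2))
    (b₁ : ℝ)
    (hb₁ : b₁ = Real.sqrt n
      * (Real.sqrt (H ^ 2 * (n : ℝ) ^ 2 + 4 * (n : ℝ) - 4) - H * ((n : ℝ) - 2))
      / (2 * Real.sqrt ((n : ℝ) - 1))) :
    (⨅ t : ℝ, Real.sqrt ((n : ℝ) * ((n : ℝ) - 1)) * g t ^ (-(n : ℤ))) < b₁ ∧
    b₁ < (⨆ t : ℝ, Real.sqrt ((n : ℝ) * ((n : ℝ) - 1)) * g t ^ (-(n : ℤ))) := by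
  have hn3 : (3:ℝ) ≤ (n:ℝ) := by exact_mod_cast hn
  have hnpos : 0 < n := by omega
  -- discriminant
  set D := H ^ 2 * (n : ℝ) ^ 2 + 4 * (n : ℝ) - 4 with hDdef
  have hDpos : 0 < D := by nlinarith [sq_nonneg (H * (n:ℝ))]
  set s := Real.sqrt D with hsdef
  have hs_sq : s ^ 2 = D := Real.sq_sqrt hDpos.le
  have hs_pos : 0 < s := Real.sqrt_pos.2 hDpos
  -- ustar
  set ustar := (s - H * ((n:ℝ) - 2)) / (2 * ((n:ℝ) - 1)) with husdef
  have h2u : 2 * ((n:ℝ) - 1) * ustar = s - H * ((n:ℝ) - 2) := by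
    have hne : ((n:ℝ) - 1) ≠ 0 := by linarith
    rw [husdef]; field_simp
  have hustar_pos : 0 < ustar := by
    rw [husdef]
    apply div_pos _ (by linarith)
    nlinarith [hs_sq, hs_pos, sq_nonneg H]
  have hkey : 0 ≤ ((n:ℝ) - 1) * ustar + ((n:ℝ) - 2) * H := by
    nlinarith [h2u, hs_sq, hs_pos, sq_nonneg H]
  have hsub : (2 * ((n:ℝ) - 1) * ustar + H * ((n:ℝ) - 2)) ^ 2
      = H ^ 2 * (n:ℝ) ^ 2 + 4 * (n:ℝ) - 4 := by
    rw [show 2 * ((n:ℝ) - 1) * ustar + H * ((n:ℝ) - 2) = s by linarith]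
    rw [hs_sq]
  have hqz : ((n:ℝ) - 1) * ustar ^ 2 + ((n:ℝ) - 2) * H * ustar - (1 + H ^ 2) = 0 := by
    have h4 : 4 * ((n:ℝ) - 1) *
        (((n:ℝ) - 1) * ustar ^ 2 + ((n:ℝ) - 2) * H * ustar - (1 + H ^ 2)) = 0 := by
      linear_combination hsub
    have hne : (4 * ((n:ℝ) - 1)) ≠ 0 := ne_of_gt (by linarith)
    exact (mul_eq_zero.mp h4).resolve_left hne
  clear_value D s ustar
  have hq_nonneg : ∀ u : ℝ, ustar ≤ u →
      0 ≤ ((n:ℝ) - 1) * u ^ 2 + ((n:ℝ) - 2) * H * u - (1 + H ^ 2) := by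
    intro u hu
    have h1 : 0 ≤ ((n:ℝ) - 1) * (u + ustar) + ((n:ℝ) - 2) * H := by nlinarith
    nlinarith [mul_nonneg (sub_nonneg.2 hu) h1]
  have hq_nonpos : ∀ u : ℝ, 0 < u → u ≤ ustar →
      ((n:ℝ) - 1) * u ^ 2 + ((n:ℝ) - 2) * H * u - (1 + H ^ 2) ≤ 0 := by
    intro u hu0 hu
    have h1 : 0 ≤ ((n:ℝ) - 1) * (u + ustar) + ((n:ℝ) - 2) * H := by nlinarith
    nlinarith [mul_nonneg (sub_nonneg.2 hu) h1]
  -- xstar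
  set xstar := ustar ^ ((-1 : ℝ) / (n:ℝ)) with hxdef
  have hxs_pos : 0 < xstar := Real.rpow_pos_of_pos hustar_pos _
  have hxs_pow : xstar ^ (n:ℕ) = ustar⁻¹ := by
    rw [hxdef, ← Real.rpow_natCast (ustar ^ ((-1:ℝ)/(n:ℝ))) n, ← Real.rpow_mul hustar_pos.le]
    rw [div_mul_cancel₀ _ (by positivity : ((n:ℝ)) ≠ 0)]
    exact Real.rpow_neg_one ustar
  have hxs_rel : xstar ^ (-(n:ℤ)) = ustar := by
    rw [zpow_neg, zpow_natCast, hxs_pow, inv_inv]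
  clear_value xstar
  -- monotonicity of F
  have hFanti : AntitoneOn (fun x : ℝ => x ^ 2 * (1 + (H + x ^ (-(n:ℤ))) ^ 2))
      (Set.Ioc 0 xstar) := F_antitoneOn n H ustar xstar hnpos hxs_rel hq_nonneg
  have hFmono : MonotoneOn (fun x : ℝ => x ^ 2 * (1 + (H + x ^ (-(n:ℤ))) ^ 2))
      (Set.Ici xstar) := F_monotoneOn n H ustar xstar hnpos hxs_pos hxs_rel hq_nonpos
    -- some point with nonzero derivative
  obtain ⟨t₀, ht₀⟩ : ∃ t, deriv g t ≠ 0 := by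
    by_contra h'
    push_neg at h'
    obtain ⟨t₁, t₂, h12⟩ := hgnc
    exact h12 (is_const_of_deriv_eq_zero hg h' t₁ t₂)
  -- reflected solution
  set gr := fun t : ℝ => g (-t) with hgrdef
  have hgr : Differentiable ℝ gr := hg.comp differentiable_neg
  have hgrpos : ∀ t, 0 < gr t := fun t => hgpos (-t)
  have hgrderiv : ∀ t, deriv gr t = -(deriv g (-t)) := by
    intro t
    have h1 : HasDerivAt gr (deriv g (-t) * (-1)) t :=
      (hg (-t)).hasDerivAt.comp t (hasDerivAt_neg t)
    rw [h1.deriv]; ring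
  have hodegr : ∀ t : ℝ, (deriv gr t) ^ 2 =
      C - (gr t) ^ 2 * (1 + (H + gr t ^ (-(n : ℤ))) ^ 2) := by
    intro t
    rw [hgrderiv t, neg_sq]
    show _ = C - (g (-t)) ^ 2 * (1 + (H + g (-t) ^ (-(n : ℤ))) ^ 2)
    exact hode (-t)
  -- existence of values on both sides of xstar
  have hup : ∃ t, xstar < g t := by
    by_contra h
    push_neg at h
    rcases ht₀.lt_or_gt with hneg | hpos
    · exact escape_up n H C xstar gr hgr hgrpos hodegr hFanti (-t₀)
        (by rw [hgrderiv (-t₀), neg_neg]; linarith) (fun t => h (-t))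
    · exact escape_up n H C xstar g hg hgpos hode hFanti t₀ hpos h
  have hdown : ∃ t, g t < xstar := by
    by_contra h
    push_neg at h
    rcases ht₀.lt_or_gt with hneg | hpos
    · exact escape_down n H C xstar g hg hgpos hode hFmono t₀ hneg h
    · exact escape_down n H C xstar gr hgr hgrpos hodegr hFmono (-t₀)
        (by rw [hgrderiv (-t₀), neg_neg]; linarith) (fun t => h (-t))
  -- b₁ in terms of ustar
  have hsqc_pos : 0 < Real.sqrt ((n:ℝ) * ((n:ℝ) - 1)) := Real.sqrt_pos.2 (mul_pos (by linarith : (0:ℝ) < (n:ℝ)) (by linarith : (0:ℝ) < (n:ℝ) - 1))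
  have hbeq : b₁ = Real.sqrt ((n:ℝ) * ((n:ℝ) - 1)) * ustar := by
    have hsq : Real.sqrt ((n:ℝ) * ((n:ℝ) - 1)) = Real.sqrt (n:ℝ) * Real.sqrt ((n:ℝ) - 1) :=
      Real.sqrt_mul (by positivity) _
    have hss : Real.sqrt ((n:ℝ) - 1) * Real.sqrt ((n:ℝ) - 1) = (n:ℝ) - 1 :=
      Real.mul_self_sqrt (by linarith)
    have hsn1 : 0 < Real.sqrt ((n:ℝ) - 1) := Real.sqrt_pos.2 (by linarith)
    rw [hb₁, hsq, div_eq_iff (ne_of_gt (by linarith : (0:ℝ) < 2 * Real.sqrt ((n:ℝ) - 1)))]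
    linear_combination (-(2 * Real.sqrt (n:ℝ) * ustar)) * hss + (-(Real.sqrt (n:ℝ))) * h2u
  -- bound on g^(-n)
  have hM : ∀ t, g t ^ (-(n:ℤ)) ≤ max (max 1 (2 * |H|)) (4 * C) := by
    intro t
    exact u_bound n hn H C (g t) (hgpos t)
      (by linarith [hode t, sq_nonneg (deriv g t)])
  constructor
  · obtain ⟨t, ht⟩ := hup
    have hlt : g t ^ (-(n:ℤ)) < ustar := by
      rw [← hxs_rel]
      exact zpow_neg_anti' hxs_pos ht hnpos
    have hb : Real.sqrt ((n:ℝ) * ((n:ℝ) - 1)) * g t ^ (-(n:ℤ)) < b₁ := by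
      rw [hbeq]
      exact mul_lt_mul_of_pos_left hlt hsqc_pos
    refine lt_of_le_of_lt (ciInf_le (f := fun t : ℝ => Real.sqrt ((n:ℝ) * ((n:ℝ) - 1)) * g t ^ (-(n:ℤ))) ?_ t) hb
    refine ⟨0, ?_⟩
    rintro v ⟨t', rfl⟩
    exact mul_nonneg (Real.sqrt_nonneg _) (zpow_nonneg (hgpos t').le _)
  · obtain ⟨t, ht⟩ := hdown
    have hlt : ustar < g t ^ (-(n:ℤ)) := by
      rw [← hxs_rel]
      exact zpow_neg_anti' (hgpos t) ht hnpos
    have hb : b₁ < Real.sqrt ((n:ℝ) * ((n:ℝ) - 1)) * g t ^ (-(n:ℤ)) := by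
      rw [hbeq]
      exact mul_lt_mul_of_pos_left hlt hsqc_pos
    refine lt_of_lt_of_le hb (le_ciSup (f := fun t : ℝ => Real.sqrt ((n:ℝ) * ((n:ℝ) - 1)) * g t ^ (-(n:ℤ))) ?_ t)
    refine ⟨Real.sqrt ((n:ℝ) * ((n:ℝ) - 1)) * max (max 1 (2 * |H|)) (4 * C), ?_⟩
    rintro v ⟨t', rfl⟩
    exact mul_le_mul_of_nonneg_left (hM t') (Real.sqrt_nonneg _)
end
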